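/- arXiv:0909.4715 — 9 statements merged into one kernel-verified Lean document; each statement's English description precedes it below -/
import Mathlib

section
/- If a category V has disjoint coproducts and a strict initial object, and every object of V is a coproduct of connected objects, then V is extensive. -/
/-!
Write every object as a coproduct of connected objects. A connected object has no map to the
initial object, so by disjointness a map from it into `∐ X` factors through exactly one
coprojection. Consequently a map `∐ Yᵢ ⟶ ∐ Y'ᵢ` over `∐ X` sends each `Yᵢ` into `Y'ᵢ` (fullness;
faithfulness is monicity of the coprojections), and an object `W` over `∐ X` is `∐ Wᵢ`, where
`Wᵢ` collects the connected summands of `W` whose map to `∐ X` lands in `Xᵢ`.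
-/

open CategoryTheory CategoryTheory.Limits Opposite

universe w v u

namespace Paper

variable {V : Type u} [Category.{v} V]

/-- An object is connected when its covariant hom functor preserves coproducts. -/
def IsConnectedObj (X : V) : Prop :=
  ∀ J : Type w, Nonempty (PreservesColimitsOfShape (Discrete J) (coyoneda.obj (op X)))

/-- The canonical functor `∏_i (V/X_i) ⥤ V/(∐_i X_i)` sending a family `(f_i : Y_i ⟶ X_i)`
to `∐_i f_i`. -/
noncomputable def overCoproduct [HasCoproducts.{w} V] {I : Type w} (X : I → V) :
    (∀ i, Over (X i)) ⥤ Over (∐ X) where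
  obj f := Over.mk (Sigma.desc fun i => (f i).hom ≫ Sigma.ι X i)
  map {f g} α := Over.homMk (Limits.Sigma.map fun i => (α i).left) (by
    dsimp
    ext i
    simp only [Limits.ι_colimMap_assoc, Discrete.functor_obj_eq_as, Discrete.natTrans_app,
      Limits.colimit.ι_desc, Cofan.mk_pt, Cofan.mk_ι_app, Limits.colimit.ι_desc_assoc]
    rw [← Over.w (α i)]
    simp [Category.assoc])
  map_id f := by
    apply Over.OverMorphism.ext
    dsimp
    ext i
    simp
  map_comp {f g h} α β := by
    apply Over.OverMorphism.ext
    dsimp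
    ext i
    simp

/-- A category is extensive when it has coproducts and all the canonical functors
`∏_i (V/X_i) ⥤ V/(∐_i X_i)` are equivalences of categories. -/
def IsExtensive (V : Type u) [Category.{v} V] : Prop :=
  ∃ _ : HasCoproducts.{w} V, ∀ {I : Type w} (X : I → V),
    letI : HasCoproducts.{w} V := ‹_›
    Nonempty (overCoproduct X).IsEquivalence

def IsCoproductOfConnected (X : V) : Prop :=
  ∃ (I : Type w) (Y : I → V) (f : ∀ i, Y i ⟶ X),
    (∀ i, IsConnectedObj.{w} (Y i)) ∧ Nonempty (IsColimit (Cofan.mk X f))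

section Connected

variable [HasCoproducts.{w} V]

lemma IsConnectedObj.isEmpty_hom_initial [HasInitial V] {C : V} (hC : IsConnectedObj.{w} C) :
    IsEmpty (C ⟶ ⊥_ V) := by
  obtain ⟨_⟩ := hC PEmpty.{w+1}
  let E := Discrete.functor (PEmpty.elim : PEmpty.{w+1} → V)
  have hE := isColimitEquivIsInitialOfIsEmpty _ _
    (isColimitOfPreserves (coyoneda.obj (op C)) (colimit.isColimit E))
  have : IsEmpty (C ⟶ colimit E) := (Types.initial_iff_empty _).mp ⟨hE⟩
  exact ⟨fun t => this.false (t ≫ initial.to _)⟩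

lemma IsConnectedObj.exists_comp_ι_eq {C : V} (hC : IsConnectedObj.{w} C) {I : Type w}
    (X : I → V) (h : C ⟶ ∐ X) : ∃ (i : I) (g : C ⟶ X i), g ≫ Sigma.ι X i = h := by
  obtain ⟨_⟩ := hC I
  have hc := isColimitOfPreserves (coyoneda.obj (op C)) (colimit.isColimit (Discrete.functor X))
  obtain ⟨⟨i⟩, g, hg⟩ := Types.jointly_surjective _ hc h
  exact ⟨i, g, hg⟩

lemma IsConnectedObj.eq_of_comp_ι_eq [HasInitial V] {C : V} (hC : IsConnectedObj.{w} C)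
    {I : Type w} {X : I → V}
    (hdisj : ∀ i j, i ≠ j →
      IsPullback (initial.to (X i)) (initial.to (X j)) (Sigma.ι X i) (Sigma.ι X j))
    {i j : I} (g : C ⟶ X i) (g' : C ⟶ X j) (h : g ≫ Sigma.ι X i = g' ≫ Sigma.ι X j) : i = j :=
  by_contra fun hij => hC.isEmpty_hom_initial.false ((hdisj i j hij).lift g g' h)

lemma IsConnectedObj.exists_comp_ι_eq_of_comp_map_eq [HasInitial V] {C : V}
    (hC : IsConnectedObj.{w} C) {I : Type w} {X Y : I → V}
    (hdisj : ∀ i j, i ≠ j →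
      IsPullback (initial.to (X i)) (initial.to (X j)) (Sigma.ι X i) (Sigma.ι X j))
    (p : ∀ i, Y i ⟶ X i) {i : I} (c : C ⟶ ∐ Y) (d : C ⟶ X i)
    (h : c ≫ Limits.Sigma.map p = d ≫ Sigma.ι X i) : ∃ v : C ⟶ Y i, v ≫ Sigma.ι Y i = c := by
  obtain ⟨j, v, rfl⟩ := hC.exists_comp_ι_eq Y c
  obtain rfl : j = i := hC.eq_of_comp_ι_eq hdisj (v ≫ p j) d (by simpa using h)
  exact ⟨v, rfl⟩

lemma IsCoproductOfConnected.exists_comp_ι_eq_of_comp_map_eq [HasInitial V] {Z : V}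
    (hZ : IsCoproductOfConnected.{w} Z) {I : Type w} {X Y : I → V}
    (hdisj : ∀ i j, i ≠ j →
      IsPullback (initial.to (X i)) (initial.to (X j)) (Sigma.ι X i) (Sigma.ι X j))
    (p : ∀ i, Y i ⟶ X i) {i : I} (c : Z ⟶ ∐ Y) (d : Z ⟶ X i)
    (h : c ≫ Limits.Sigma.map p = d ≫ Sigma.ι X i) : ∃ v : Z ⟶ Y i, v ≫ Sigma.ι Y i = c := by
  obtain ⟨K, C, e, hC, ⟨hc⟩⟩ := hZ
  choose v hv using fun k =>
    (hC k).exists_comp_ι_eq_of_comp_map_eq hdisj p (e k ≫ c) (e k ≫ d) (by simp [h])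
  exact ⟨Cofan.IsColimit.desc hc v, Cofan.IsColimit.hom_ext hc _ _ fun k =>
    (Cofan.IsColimit.fac_assoc hc v k _).trans (hv k)⟩

end Connected

section Extensive

variable [HasCoproducts.{w} V] {I : Type w} (X : I → V)

@[simp]
lemma overCoproduct_obj_hom (f : ∀ i, Over (X i)) :
    ((overCoproduct X).obj f).hom = Limits.Sigma.map fun i => (f i).hom := by
  refine Sigma.hom_ext _ _ fun i => ?_
  simp [overCoproduct]

lemma overCoproduct_faithful (hmono : ∀ (Y : I → V) (i : I), Mono (Sigma.ι Y i)) :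
    (overCoproduct X).Faithful where
  map_injective {f g} α β h := by
    funext i
    ext
    simpa [overCoproduct, cancel_mono] using congr(Sigma.ι _ i ≫ CommaMorphism.left $h)

lemma overCoproduct_full [HasInitial V] (hmono : ∀ i, Mono (Sigma.ι X i))
    (hdisj : ∀ i j, i ≠ j →
      IsPullback (initial.to (X i)) (initial.to (X j)) (Sigma.ι X i) (Sigma.ι X j))
    (hconn : ∀ Z : V, IsCoproductOfConnected.{w} Z) : (overCoproduct X).Full where
  map_surjective {f f'} g := by
    -- `g.left` with its endpoints unfolded to coproducts, so that `Sigma.ι` lemmas apply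
    let G : (∐ fun i => (f i).left) ⟶ ∐ fun i => (f' i).left := g.left
    have hg : G ≫ Limits.Sigma.map (fun i => (f' i).hom) =
        Limits.Sigma.map fun i => (f i).hom := by
      rw [← overCoproduct_obj_hom, ← overCoproduct_obj_hom]
      exact Over.w g
    choose t ht using fun i => (hconn (f i).left).exists_comp_ι_eq_of_comp_map_eq hdisj
      (fun i => (f' i).hom) (Sigma.ι (fun i => (f i).left) i ≫ G) (f i).hom (by simp [hg])
    have ht_over : ∀ i, t i ≫ (f' i).hom = (f i).hom := fun i => by
      rw [← cancel_mono (Sigma.ι X i)]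
      simpa [hg] using congr($(ht i) ≫ Limits.Sigma.map fun i => (f' i).hom)
    refine ⟨fun i => Over.homMk (t i) (ht_over i), ?_⟩
    ext
    refine Sigma.hom_ext _ _ fun i => ?_
    simp [overCoproduct, ht, G]

noncomputable def fiberwiseCoproductIso {K : Type w} {C : K → V} {Z : V} {e : ∀ k, C k ⟶ Z}
    (hc : IsColimit (Cofan.mk Z e)) (idx : K → I) :
    (∐ fun i => ∐ fun k : {k // idx k = i} => C k) ≅ Z where
  hom := Sigma.desc fun i => Sigma.desc fun k => e k
  inv := Cofan.IsColimit.desc hc fun k =>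
    Sigma.ι (fun k' : {k' // idx k' = idx k} => C k') ⟨k, rfl⟩ ≫
      Sigma.ι (fun i => ∐ fun k : {k // idx k = i} => C k) (idx k)
  hom_inv_id := by
    ext i ⟨k, rfl⟩
    simpa using Cofan.IsColimit.fac hc _ k
  inv_hom_id := Cofan.IsColimit.hom_ext hc _ _ fun k => by
    rw [Cofan.IsColimit.fac_assoc]
    simp

lemma overCoproduct_essSurj (hconn : ∀ Z : V, IsCoproductOfConnected.{w} Z) :
    (overCoproduct X).EssSurj where
  mem_essImage W := by
    obtain ⟨K, C, e, hC, ⟨hc⟩⟩ := hconn W.left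
    choose idx g hg using fun k => (hC k).exists_comp_ι_eq X (e k ≫ W.hom)
    let p i : (∐ fun k : {k // idx k = i} => C k) ⟶ X i :=
      Sigma.desc fun k => g k ≫ eqToHom (congrArg X k.2)
    refine ⟨fun i => Over.mk (p i), ⟨Over.isoMk (fiberwiseCoproductIso hc idx) ?_⟩⟩
    refine Sigma.hom_ext _ _ fun i => Sigma.hom_ext _ _ fun ⟨k, hk⟩ => ?_
    subst hk
    simp [fiberwiseCoproductIso, p, overCoproduct, hg]

end Extensive

theorem stmt0_general (V : Type u) [Category.{v} V] [HasCoproducts.{w} V] [HasInitial V]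
    (hmono : ∀ {I : Type w} (X : I → V) (i : I), Mono (Sigma.ι X i))
    (hdisj : ∀ {I : Type w} (X : I → V) (i j : I), i ≠ j →
      IsPullback (initial.to (X i)) (initial.to (X j)) (Sigma.ι X i) (Sigma.ι X j))
    (hconn : ∀ X : V, ∃ (I : Type w) (Y : I → V) (f : ∀ i, Y i ⟶ X),
      (∀ i, IsConnectedObj.{w} (Y i)) ∧ Nonempty (IsColimit (Cofan.mk X f))) :
    IsExtensive.{w} V := by
  refine ⟨inferInstance, fun X => ⟨?_⟩⟩
  have := overCoproduct_faithful X hmono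
  have := overCoproduct_full X (hmono X) (hdisj X) hconn
  have := overCoproduct_essSurj X hconn
  exact { }

/-- If a category `V` has disjoint coproducts and a strict initial object, and
every object of `V` is a coproduct of connected objects, then `V` is extensive. -/
theorem stmt0 (V : Type u) [Category.{v} V] [HasCoproducts.{w} V] [HasInitial V]
    [HasStrictInitialObjects V]
    (hmono : ∀ {I : Type w} (X : I → V) (i : I), Mono (Sigma.ι X i))
    (hdisj : ∀ {I : Type w} (X : I → V) (i j : I), i ≠ j →
      IsPullback (initial.to (X i)) (initial.to (X j)) (Sigma.ι X i) (Sigma.ι X j))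
    (hconn : ∀ X : V, ∃ (I : Type w) (Y : I → V) (f : ∀ i, Y i ⟶ X),
      (∀ i, IsConnectedObj.{w} (Y i)) ∧ Nonempty (IsColimit (Cofan.mk X f))) :
    IsExtensive.{w} V :=
  stmt0_general V hmono hdisj hconn

end Paper
end

section
/- For a lextensive category V, every object of V can be expressed as a coproduct of connected objects if and only if the functor (−)·1 : Set → V sending a set Z to the Z-fold copower of the terminal object has a left adjoint. -/
open CategoryTheory CategoryTheory.Limits Opposite

universe w v u

namespace Paper

variable {V : Type u} [Category.{v} V]

/-- The functor `(−)·1 : Set → V` sending a set `Z` to the `Z`-fold copower of the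
terminal object. -/
noncomputable def copowerOne (V : Type u) [Category.{v} V] [HasTerminal V]
    [HasCoproducts.{w} V] : Type w ⥤ V where
  obj Z := ∐ fun _ : Z => ⊤_ V
  map {Z Z'} f := Sigma.desc fun z => Sigma.ι (fun _ : Z' => ⊤_ V) (f z)
  map_id Z := by
    ext z
    simp
  map_comp {Z Z' Z''} f g := by
    ext z
    simp

section Coproducts

theorem bijective_sigma_map_of_isColimit {J : Type*} {Y : J → V} (G : V ⥤ Type*)
    [PreservesColimit (Discrete.functor Y) G] {X : V} {f : ∀ j, Y j ⟶ X}
    (hf : IsColimit (Cofan.mk X f)) :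
    Function.Bijective fun p : Σ j, G.obj (Y j) => G.map (f p.1) p.2 :=
  (Cofan.nonempty_isColimit_iff_bijective_fromSigma _).1
    ⟨isColimitCofanMkObjOfIsColimit G Y f hf⟩

theorem isIso_cofan_inj_of_isInitial {J : Type*} {Y : J → V} {c : Cofan Y} (hc : IsColimit c)
    (j₀ : J) (hY : ∀ j ≠ j₀, IsInitial (Y j)) : IsIso (c.inj j₀) := by
  classical
  refine ⟨Cofan.IsColimit.desc hc fun j =>
    if h : j = j₀ then eqToHom (congrArg Y h) else (hY j h).to _, by simp, ?_⟩
  refine Cofan.IsColimit.hom_ext hc _ _ fun j => ?_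
  by_cases h : j = j₀
  · subst h
    simp
  · exact (hY j h).hom_ext _ _

variable [HasCoproducts.{w} V]

theorem isConnectedObj_iff_bijective (Y : V) :
    IsConnectedObj.{w} Y ↔ ∀ (J : Type w) (W : J → V),
      Function.Bijective fun p : Σ j, (Y ⟶ W j) => p.2 ≫ Sigma.ι W p.1 := by
  refine ⟨fun hY J W => ?_, fun h J => ⟨?_⟩⟩
  · have := (hY J).some
    exact bijective_sigma_map_of_isColimit (coyoneda.obj (op Y)) (coproductIsCoproduct W)
  · have (W : J → V) : PreservesColimit (Discrete.functor W) (coyoneda.obj (op Y)) :=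
      preservesColimit_of_preserves_colimit_cocone (coproductIsCoproduct W)
        ((isColimitMapCoconeCofanMkEquiv _ _ _).symm
          ((Cofan.nonempty_isColimit_iff_bijective_fromSigma _).2 (h J W)).some)
    exact preservesColimitsOfShape_of_discrete _

end Coproducts

section LeftAdjointOfDecomposition

variable [HasTerminal V] [HasCoproducts.{w} V]

theorem leftAdjointObjIsDefined_copowerOne_of_isConnectedObj {Y : V}
    (hY : IsConnectedObj.{w} Y) : (copowerOne.{w} V).leftAdjointObjIsDefined Y :=
  Functor.CorepresentableBy.isCorepresentable (X := PUnit.{w + 1})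
  { homEquiv {Z} := (TypeCat.homEquiv.trans (Equiv.punitArrowEquiv Z)).trans
      (Equiv.ofBijective (fun z => terminal.from Y ≫ Sigma.ι (fun _ : Z => ⊤_ V) z)
        (((isConnectedObj_iff_bijective Y).1 hY Z fun _ => ⊤_ V).comp
          (Equiv.sigmaUnique Z _).symm.bijective))
    homEquiv_comp {Z Z'} g f := by
      change _ = (_ ≫ _) ≫ Sigma.desc _
      simp
      rfl }

theorem isRightAdjoint_copowerOne_of_isCoproductOfConnected
    (hX : ∀ X : V, IsCoproductOfConnected.{w} X) : (copowerOne.{w} V).IsRightAdjoint := by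
  refine Functor.isRightAdjoint_of_leftAdjointObjIsDefined_eq_top (top_unique fun X _ => ?_)
  obtain ⟨I, Y, f, hY, ⟨hf⟩⟩ := hX X
  exact Functor.leftAdjointObjIsDefined_of_isColimit hf fun i =>
    leftAdjointObjIsDefined_copowerOne_of_isConnectedObj (hY i.as)

end LeftAdjointOfDecomposition

namespace IsExtensive

variable [HasCoproducts.{w} V]

theorem exists_isColimit_cofan (hext : IsExtensive.{w} V) {J : Type w} (W : J → V) {Y : V}
    (h : Y ⟶ ∐ W) :
    ∃ (Y' : J → V) (c : ∀ j, Y' j ⟶ W j) (k : ∀ j, Y' j ⟶ Y),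
      Nonempty (IsColimit (Cofan.mk Y k)) ∧ ∀ j, k j ≫ h = c j ≫ Sigma.ι W j := by
  have := (hext.choose_spec W).some
  let E := overCoproduct W
  let b := E.objPreimage (Over.mk h)
  let e : E.obj b ≅ Over.mk h := E.objObjPreimageIso _
  refine ⟨fun j => (b j).left, fun j => (b j).hom,
    fun j => Sigma.ι (fun j => (b j).left) j ≫ e.hom.left,
    ⟨(coproductIsCoproduct _).ofIsoColimit (Cocone.ext ((Over.forget _).mapIso e) ?_)⟩,
    fun j => ?_⟩
  · rintro ⟨j⟩
    rfl
  · simpa [E, overCoproduct] using Sigma.ι (fun j => (b j).left) j ≫= Over.w e.hom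

theorem hasStrictInitialObjects (hext : IsExtensive.{w} V) : HasStrictInitialObjects V where
  out {I A} f hI := by
    obtain ⟨_, _, _, ⟨hk⟩, -⟩ :=
      hext.exists_isColimit_cofan (isEmptyElim : PEmpty.{w + 1} → V) (f ≫ hI.to _)
    exact isIso_of_isInitial (isColimitEquivIsInitialOfIsEmpty V _ hk) hI f

theorem mono_sigmaDesc (hext : IsExtensive.{w} V) {J : Type w} {W : J → V}
    (b : ∀ j, Over (W j)) (hb : ∀ j, Mono (b j).hom) :
    Mono (Sigma.desc fun j => (b j).hom ≫ Sigma.ι W j) := by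
  have := (hext.choose_spec W).some
  have (j : J) (x : Over (W j)) : Subsingleton (x ⟶ b j) :=
    ⟨fun α β => Over.OverMorphism.ext ((cancel_mono (b j).hom).1 (by simp))⟩
  have (a : ∀ j, Over (W j)) : Subsingleton (a ⟶ b) :=
    ⟨fun α β => funext fun j => Subsingleton.elim (α j) (β j)⟩
  have (A : Over (∐ W)) : Subsingleton (A ⟶ (overCoproduct W).obj b) :=
    ((overCoproduct W).asEquivalence.symm.toAdjunction.homEquiv A b).symm.subsingleton
  refine ⟨fun g₁ g₂ hg => congrArg CommaMorphism.left (Subsingleton.elim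
    (Over.homMk g₁ rfl :
      Over.mk (g₁ ≫ ((overCoproduct W).obj b).hom) ⟶ (overCoproduct W).obj b)
    (Over.homMk g₂ hg.symm))⟩

theorem mono_sigma_ι (hext : IsExtensive.{w} V) {J : Type w} (W : J → V) (j : J) :
    Mono (Sigma.ι W j) := by
  classical
  have := hext.hasStrictInitialObjects
  -- All summands of `b` but `W j` are initial, so `∐ b ≅ W j`, and `b` has monic structure maps.
  let b : ∀ j', Over (W j') :=
    Function.update (fun j' => Over.mk (initial.to (W j'))) j (Over.mk (𝟙 (W j)))
  have hb_self : b j = Over.mk (𝟙 (W j)) := Function.update_self ..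
  have hb_ne (j' : J) (h : j' ≠ j) : b j' = Over.mk (initial.to (W j')) :=
    Function.update_of_ne h _ _
  have := hext.mono_sigmaDesc b fun j' => by
    by_cases h : j' = j
    · subst h
      rw [hb_self]
      exact inferInstanceAs (Mono (𝟙 _))
    · rw [hb_ne j' h]
      exact initial.mono_from _ _
  have : IsIso (Sigma.ι (fun j' => (b j').left) j) :=
    isIso_cofan_inj_of_isInitial (coproductIsCoproduct _) j fun j' h => by
      rw [hb_ne j' h]
      exact initialIsInitial
  have : Mono ((b j).hom ≫ Sigma.ι W j) := by
    rw [← Sigma.ι_desc (fun j' => (b j').hom ≫ Sigma.ι W j') j]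
    infer_instance
  rw [hb_self] at this
  simpa using this

end IsExtensive

section DecompositionOfLeftAdjoint

variable [HasTerminal V] [HasCoproducts.{w} V] {L : V ⥤ Type w}

theorem copowerOne_map_const {Z Z' : Type w} (z' : Z') :
    (copowerOne.{w} V).map (TypeCat.ofHom fun _ : Z => z') =
      terminal.from _ ≫ Sigma.ι (fun _ : Z' => ⊤_ V) z' := by
  refine Sigma.hom_ext _ _ fun z => ?_
  simp [copowerOne, terminal.hom_ext (terminal.from (⊤_ V)) (𝟙 _)]

theorem homEquiv_symm_terminal_from_comp_ι (adj : L ⊣ copowerOne.{w} V) {C : V} {Z : Type w}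
    (z : Z) :
    (adj.homEquiv C Z).symm (terminal.from C ≫ Sigma.ι (fun _ : Z => ⊤_ V) z) =
      TypeCat.ofHom fun _ => z := by
  rw [Equiv.symm_apply_eq, adj.homEquiv_unit, copowerOne_map_const]
  exact (congrArg (· ≫ _) (terminal.comp_from _)).symm.trans (Category.assoc _ _ _)

theorem eq_of_terminal_from_comp_ι_eq (adj : L ⊣ copowerOne.{w} V) {Y : V}
    [Nonempty (L.obj Y)] {Z : Type w} {z z' : Z}
    (h : terminal.from Y ≫ Sigma.ι (fun _ : Z => ⊤_ V) z =
      terminal.from Y ≫ Sigma.ι (fun _ : Z => ⊤_ V) z') : z = z' := by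
  have := (homEquiv_symm_terminal_from_comp_ι adj z).symm.trans
    ((congrArg (adj.homEquiv Y Z).symm h).trans (homEquiv_symm_terminal_from_comp_ι adj z'))
  exact ConcreteCategory.congr_hom this (Classical.arbitrary _)

noncomputable def isInitialOfIsEmptyObj (hext : IsExtensive.{w} V)
    (adj : L ⊣ copowerOne.{w} V) {Y : V} [IsEmpty (L.obj Y)] : IsInitial Y :=
  haveI := hext.hasStrictInitialObjects
  IsInitial.ofStrict (adj.homEquiv Y PEmpty (TypeCat.ofHom isEmptyElim))
    (isColimitEquivIsInitialOfIsEmpty V _ (coproductIsCoproduct _))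

theorem isConnectedObj_of_nonempty_of_subsingleton (hext : IsExtensive.{w} V)
    (adj : L ⊣ copowerOne.{w} V) {Y : V} [Nonempty (L.obj Y)] [Subsingleton (L.obj Y)] :
    IsConnectedObj.{w} Y := by
  refine (isConnectedObj_iff_bijective Y).2 fun J W => ⟨?_, fun h => ?_⟩
  · rintro ⟨j, g⟩ ⟨j', g'⟩ (hg : g ≫ Sigma.ι W j = g' ≫ Sigma.ι W j')
    -- The indices agree already in `J·1`, where they are read off by transposing to `L Y ⟶ J`.
    obtain rfl : j = j' := eq_of_terminal_from_comp_ι_eq adj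
      (by simpa using hg =≫ Limits.Sigma.map fun j => terminal.from (W j))
    have := hext.mono_sigma_ι W j
    obtain rfl : g = g' := (cancel_mono _).1 hg
    rfl
  · obtain ⟨Y', c, k, ⟨hk⟩, hkc⟩ := hext.exists_isColimit_cofan W h
    have := (adj.leftAdjoint_preservesColimits : PreservesColimitsOfSize.{w, w} L)
    have hL := bijective_sigma_map_of_isColimit L hk
    obtain ⟨⟨j₀, y₀⟩, -⟩ := hL.2 (Classical.arbitrary _)
    have hY' (j : J) (hj : j ≠ j₀) : IsInitial (Y' j) :=
      have : IsEmpty (L.obj (Y' j)) := ⟨fun y => hj (congrArg Sigma.fst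
        (hL.1 (a₁ := ⟨j, y⟩) (a₂ := ⟨j₀, y₀⟩) (Subsingleton.elim _ _)))⟩
      isInitialOfIsEmptyObj hext adj
    have : IsIso (k j₀) := isIso_cofan_inj_of_isInitial hk j₀ hY'
    exact ⟨⟨j₀, inv (k j₀) ≫ c j₀⟩, by simp [← hkc]⟩

theorem isCoproductOfConnected_of_adjunction (hext : IsExtensive.{w} V)
    (adj : L ⊣ copowerOne.{w} V) (X : V) : IsCoproductOfConnected.{w} X := by
  obtain ⟨Y, c, k, ⟨hk⟩, hkc⟩ := hext.exists_isColimit_cofan (Y := X) _ (adj.unit.app X)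
  have hLk (i : L.obj X) : L.map (k i) = TypeCat.ofHom fun _ => i :=
    calc L.map (k i) = (adj.homEquiv _ _).symm (k i ≫ adj.unit.app X) := by
          simp [Adjunction.homEquiv_counit]
      _ = (adj.homEquiv _ _).symm (terminal.from (Y i) ≫ Sigma.ι (fun _ => ⊤_ V) i) :=
          congrArg _ ((hkc i).trans (congrArg (· ≫ _) (Subsingleton.elim _ _)))
      _ = _ := homEquiv_symm_terminal_from_comp_ι adj i
  have := (adj.leftAdjoint_preservesColimits : PreservesColimitsOfSize.{w, w} L)
  have hL := bijective_sigma_map_of_isColimit L hk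
  refine ⟨L.obj X, Y, k, fun i => ?_, ⟨hk⟩⟩
  have : Nonempty (L.obj (Y i)) := by
    obtain ⟨⟨j, y⟩, hy⟩ := hL.2 i
    simp only [hLk] at hy
    exact hy ▸ ⟨y⟩
  have : Subsingleton (L.obj (Y i)) := ⟨fun y y' => sigma_mk_injective (β := fun i => L.obj (Y i))
    (hL.1 (a₁ := ⟨i, y⟩) (a₂ := ⟨i, y'⟩) (by simp [hLk]))⟩
  exact isConnectedObj_of_nonempty_of_subsingleton hext adj

end DecompositionOfLeftAdjoint

/-- For a lextensive category `V`, every object of `V` is a coproduct of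
connected objects iff the functor `(−)·1 : Set ⥤ V` has a left adjoint. -/
theorem stmt1 (V : Type u) [Category.{v} V] [HasFiniteLimits V] [HasCoproducts.{w} V]
    (hext : IsExtensive.{w} V) :
    (∀ X : V, ∃ (I : Type w) (Y : I → V) (f : ∀ i, Y i ⟶ X),
      (∀ i, IsConnectedObj.{w} (Y i)) ∧ Nonempty (IsColimit (Cofan.mk X f))) ↔
    (copowerOne.{w} V).IsRightAdjoint :=
  ⟨isRightAdjoint_copowerOne_of_isCoproductOfConnected, fun _ =>
    isCoproductOfConnected_of_adjunction hext (Adjunction.ofIsRightAdjoint _)⟩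

end Paper
end

section
/- If V is cocomplete then the category GV of V-enriched graphs is cocomplete, and the underlying-object-set functor (−)₀ : GV → Set is cocontinuous. -/
/-!
Colimits of `V`-graphs are computed in two layers. The object set of `colim F` is the colimit
of the object sets in `Set`; the hom object between classes `a` and `b` is the colimit in `V` of
the hom objects `(F j)(u, v)`, indexed by the triples `(j, u, v)` with `u` over `a` and `v` over
`b`. A cocone under `F` descends on objects by the universal property in `Set` and on each hom
object by the universal property in `V`, and a morphism out of the colimit is determined by
these two layers. The objects functor sends this colimit cocone to the colimit cocone in `Set`,
so it preserves colimits.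
-/

open CategoryTheory CategoryTheory.Limits Opposite

universe w v u

namespace Paper

/-- A `V`-enriched graph: a set of objects together with a hom object of `V` for each
ordered pair of objects. -/
structure VGraph (V : Type u) [Category.{v} V] : Type (max u (w + 1)) where
  objs : Type w
  hom : objs → objs → V

variable {V : Type u} [Category.{v} V]

/-- A morphism of `V`-enriched graphs. -/
structure VGraphHom (X Y : VGraph.{w} V) : Type (max w v) where
  toFun : X.objs → Y.objs
  homMap : ∀ a b : X.objs, X.hom a b ⟶ Y.hom (toFun a) (toFun b)

theorem VGraphHom.ext' {X Y : VGraph.{w} V} (f g : VGraphHom X Y)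
    (h1 : f.toFun = g.toFun) (h2 : HEq f.homMap g.homMap) : f = g := by
  cases f; cases g; cases h1; cases h2; rfl

instance : Category.{max w v} (VGraph.{w} V) where
  Hom := VGraphHom
  id X := ⟨fun a => a, fun a b => 𝟙 (X.hom a b)⟩
  comp f g := ⟨fun a => g.toFun (f.toFun a), fun a b => f.homMap a b ≫ g.homMap _ _⟩
  id_comp f := VGraphHom.ext' _ _ rfl (heq_of_eq (by
    funext a b
    exact Category.id_comp _))
  comp_id f := VGraphHom.ext' _ _ rfl (heq_of_eq (by
    funext a b
    exact Category.comp_id _))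
  assoc f g h := VGraphHom.ext' _ _ rfl (heq_of_eq (by
    funext a b
    exact Category.assoc _ _ _))

/-- The underlying-object-set functor `GV ⥤ Set`. -/
def objectsFunctor (V : Type u) [Category.{v} V] : VGraph.{w} V ⥤ Type w where
  obj X := X.objs
  map f := TypeCat.ofHom f.toFun


namespace VGraph

variable {X Y Z : VGraph.{w} V}

@[simp] lemma id_toFun (a : X.objs) : (𝟙 X : X ⟶ X).toFun a = a := rfl

@[simp] lemma comp_toFun (f : X ⟶ Y) (g : Y ⟶ Z) (a : X.objs) :
    (f ≫ g).toFun a = g.toFun (f.toFun a) := rfl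

@[simp] lemma id_homMap (a b : X.objs) : (𝟙 X : X ⟶ X).homMap a b = 𝟙 (X.hom a b) := rfl

@[simp] lemma comp_homMap (f : X ⟶ Y) (g : Y ⟶ Z) (a b : X.objs) :
    (f ≫ g).homMap a b = f.homMap a b ≫ g.homMap (f.toFun a) (f.toFun b) := rfl

def homMapOver (f : X ⟶ Y) {a b : X.objs} {a' b' : Y.objs} (ha : f.toFun a = a')
    (hb : f.toFun b = b') : X.hom a b ⟶ Y.hom a' b' :=
  f.homMap a b ≫ eqToHom (by rw [ha, hb])

@[simp] lemma homMapOver_rfl (f : X ⟶ Y) (a b : X.objs) :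
    homMapOver f (a := a) (b := b) rfl rfl = f.homMap a b := by
  simp [homMapOver]

lemma homMapOver_congr {f g : X ⟶ Y} (h : f = g) {a b : X.objs} {a' b' : Y.objs}
    (ha : f.toFun a = a') (hb : f.toFun b = b') :
    homMapOver f ha hb = homMapOver g (h ▸ ha) (h ▸ hb) := by
  subst h; rfl

lemma homMapOver_id {a b a' b' : X.objs} (ha : a = a') (hb : b = b') :
    homMapOver (𝟙 X) ha hb = eqToHom (by rw [ha, hb]) := by
  subst ha hb
  simp [homMapOver]

lemma homMapOver_comp (f : X ⟶ Y) (g : Y ⟶ Z) {a b : X.objs} {a'' b'' : Z.objs}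
    (ha : (f ≫ g).toFun a = a'') (hb : (f ≫ g).toFun b = b'') :
    homMapOver (f ≫ g) ha hb = f.homMap a b ≫ homMapOver g ha hb :=
  Category.assoc _ _ _

lemma homMapOver_comp_homMapOver (f : X ⟶ Y) (g : Y ⟶ Z) {a b : X.objs} {a' b' : Y.objs}
    {a'' b'' : Z.objs} (ha : f.toFun a = a') (hb : f.toFun b = b') (ha' : g.toFun a' = a'')
    (hb' : g.toFun b' = b'') :
    homMapOver f ha hb ≫ homMapOver g ha' hb' =
      homMapOver (f ≫ g) (by rw [comp_toFun, ha, ha']) (by rw [comp_toFun, hb, hb']) := by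
  subst ha hb ha' hb'
  simp

lemma hom_ext {f g : X ⟶ Y} (h : ∀ a, f.toFun a = g.toFun a)
    (h' : ∀ a b, homMapOver f (h a) (h b) = g.homMap a b) : f = g := by
  obtain ⟨f, fh⟩ := f
  obtain ⟨g, gh⟩ := g
  obtain rfl : f = g := funext h
  congr
  funext a b
  simpa using h' a b

end VGraph

namespace VGraph.Colimit

variable {J : Type w} [Category.{w} J] (F : J ⥤ VGraph.{w} V)

abbrev Objs : Type w := colimit (F ⋙ objectsFunctor.{w} V)

noncomputable abbrev ιObjs (j : J) (u : (F.obj j).objs) : Objs F :=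
  colimit.ι (F ⋙ objectsFunctor.{w} V) j u

lemma ιObjs_map {j j' : J} (f : j ⟶ j') (u : (F.obj j).objs) :
    ιObjs F j' ((F.map f).toFun u) = ιObjs F j u :=
  colimit.w_apply (F ⋙ objectsFunctor.{w} V) f u

structure HomIndex (a b : Objs F) : Type w where
  j : J
  u : (F.obj j).objs
  v : (F.obj j).objs
  hu : ιObjs F j u = a
  hv : ιObjs F j v = b

structure HomIndex.Hom {a b : Objs F} (x y : HomIndex F a b) : Type w where
  f : x.j ⟶ y.j
  hu : (F.map f).toFun x.u = y.u
  hv : (F.map f).toFun x.v = y.v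

instance (a b : Objs F) : Category (HomIndex F a b) where
  Hom := HomIndex.Hom F
  id x := ⟨𝟙 x.j, by simp, by simp⟩
  comp f g := ⟨f.f ≫ g.f, by simp [f.hu, g.hu], by simp [f.hv, g.hv]⟩

noncomputable def descObjs (s : Cocone F) : Objs F → s.pt.objs :=
  colimit.desc (F ⋙ objectsFunctor.{w} V) ((objectsFunctor.{w} V).mapCocone s)

lemma descObjs_ιObjs (s : Cocone F) (j : J) (u : (F.obj j).objs) :
    descObjs F s (ιObjs F j u) = (s.ι.app j).toFun u :=
  colimit.ι_desc_apply ((objectsFunctor.{w} V).mapCocone s) j u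

variable [HasColimitsOfSize.{w, w} V]

def homDiagram (a b : Objs F) : HomIndex F a b ⥤ V where
  obj x := (F.obj x.j).hom x.u x.v
  map m := homMapOver (F.map m.f) m.hu m.hv
  map_id x := (homMapOver_congr (F.map_id x.j) _ _).trans (homMapOver_id _ _)
  map_comp m n :=
    (homMapOver_congr (F.map_comp m.f n.f) _ _).trans (homMapOver_comp_homMapOver _ _ _ _ _ _).symm

noncomputable abbrev graph : VGraph.{w} V := ⟨Objs F, fun a b => colimit (homDiagram F a b)⟩

noncomputable abbrev coconeι (j : J) : F.obj j ⟶ graph F :=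
  ⟨ιObjs F j, fun u v => colimit.ι (homDiagram F _ _) ⟨j, u, v, rfl, rfl⟩⟩

lemma homMapOver_coconeι {j : J} {u v : (F.obj j).objs} {a b : Objs F} (hu : ιObjs F j u = a)
    (hv : ιObjs F j v = b) :
    homMapOver (coconeι F j) hu hv = colimit.ι (homDiagram F a b) ⟨j, u, v, hu, hv⟩ := by
  subst hu hv
  exact homMapOver_rfl _ _ _

noncomputable def cocone : Cocone F where
  pt := graph F
  ι :=
    { app := coconeι F
      naturality j j' f := by
        simp only [Functor.const_obj_obj, Functor.const_obj_map, Category.comp_id]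
        refine hom_ext (ιObjs_map F f) fun u v => (homMapOver_comp _ _ _ _).trans ?_
        -- the left side becomes `(homDiagram F _ _).map ⟨f, rfl, rfl⟩ ≫ colimit.ι _ _`
        rw [homMapOver_coconeι, ← homMapOver_rfl]
        exact colimit.w (homDiagram F _ _)
          (⟨f, rfl, rfl⟩ : (⟨j, u, v, rfl, rfl⟩ : HomIndex F _ _) ⟶
            ⟨j', (F.map f).toFun u, (F.map f).toFun v, ιObjs_map F f u, ιObjs_map F f v⟩) }

lemma cocone_hom_ext {Y : VGraph.{w} V} {m m' : graph F ⟶ Y}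
    (h : ∀ j, coconeι F j ≫ m = coconeι F j ≫ m') : m = m' := by
  have hobjs : ∀ a, m.toFun a = m'.toFun a := by
    intro a
    obtain ⟨j, u, rfl⟩ := Types.jointly_surjective' a
    exact congrArg (fun n => n.toFun u) (h j)
  refine hom_ext hobjs fun (a b : Objs F) => colimit.hom_ext fun x => ?_
  obtain ⟨j, u, v, rfl, rfl⟩ := x
  exact (homMapOver_comp (coconeι F j) m _ _).symm.trans
    ((homMapOver_congr (h j) _ _).trans (homMapOver_rfl _ _ _))

variable {F} (s : Cocone F)

noncomputable def descCocone (a b : Objs F) : Cocone (homDiagram F a b) where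
  pt := s.pt.hom (descObjs F s a) (descObjs F s b)
  ι :=
    { app x := homMapOver (s.ι.app x.j)
        ((descObjs_ιObjs F s x.j x.u).symm.trans (congrArg _ x.hu))
        ((descObjs_ιObjs F s x.j x.v).symm.trans (congrArg _ x.hv))
      naturality _ _ m :=
        ((homMapOver_comp_homMapOver (F.map m.f) _ m.hu m.hv _ _).trans
          (homMapOver_congr (s.w m.f) _ _)).trans (Category.comp_id _).symm }

noncomputable def desc : graph F ⟶ s.pt :=
  ⟨descObjs F s, fun a b => colimit.desc (homDiagram F a b) (descCocone s a b)⟩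

lemma ι_homMapOver_desc {a b : Objs F} (x : HomIndex F a b) {a' b' : s.pt.objs}
    (ha : descObjs F s a = a') (hb : descObjs F s b = b') :
    colimit.ι (homDiagram F a b) x ≫ homMapOver (desc s) ha hb =
      homMapOver (s.ι.app x.j)
        ((descObjs_ιObjs F s x.j x.u).symm.trans ((congrArg _ x.hu).trans ha))
        ((descObjs_ιObjs F s x.j x.v).symm.trans ((congrArg _ x.hv).trans hb)) := by
  subst ha hb
  exact (colimit.ι_desc_assoc (descCocone s a b) x _).trans
    ((Category.assoc _ _ _).trans (congrArg _ (eqToHom_trans _ _)))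

lemma coconeι_desc (j : J) : coconeι F j ≫ desc s = s.ι.app j :=
  hom_ext (descObjs_ιObjs F s j) fun _ _ =>
    (homMapOver_comp _ _ _ _).trans ((ι_homMapOver_desc s _ _ _).trans (homMapOver_rfl _ _ _))

variable (F)

noncomputable def isColimitCocone : IsColimit (cocone F) where
  desc := desc
  fac := coconeι_desc
  uniq s _ hm := cocone_hom_ext F fun j => (hm j).trans (coconeι_desc s j).symm

noncomputable def isColimitMapCoconeObjectsFunctor :
    IsColimit ((objectsFunctor.{w} V).mapCocone (cocone F)) :=
  (colimit.isColimit (F ⋙ objectsFunctor.{w} V)).ofIsoColimit (Cocone.ext (Iso.refl _))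

end VGraph.Colimit

/-- If `V` is cocomplete then so is the category of `V`-enriched graphs,
and the underlying-object-set functor is cocontinuous. -/
theorem stmt5 (V : Type u) [Category.{v} V] [HasColimitsOfSize.{w, w} V] :
    HasColimitsOfSize.{w, w} (VGraph.{w} V) ∧
      Nonempty (PreservesColimitsOfSize.{w, w} (objectsFunctor.{w} V)) :=
  ⟨⟨fun _ _ => ⟨fun F => ⟨_, VGraph.Colimit.isColimitCocone F⟩⟩⟩,
    ⟨⟨⟨fun {_} => preservesColimit_of_preserves_colimit_cocone
      (VGraph.Colimit.isColimitCocone _)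
      (VGraph.Colimit.isColimitMapCoconeObjectsFunctor _)⟩⟩⟩⟩

end Paper
end

section
/- Let C be a small category and C₊ the category obtained from C by adjoining a new object 0 and, for each object C of C, two maps σ_C, τ_C : 0 → C₊ (where C ↦ C₊ is the inclusion of C into C₊), subject to f₊ σ_C = σ_D and f₊ τ_C = τ_D for every f : C → D in C. Then the category of presheaf-of-sets-enriched graphs G(PSh(C)) is equivalent to PSh(C₊). In particular, if V is a presheaf topos then so is GV. -/
/-!
A presheaf `F` on `C₊` amounts to a set `F(0)` together with a presheaf `c ↦ F(c₊)` on `C`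
fibred over the constant presheaf `F(0) × F(0)` by `(σ^*, τ^*)`. Such fibred presheaves are the
same as families of presheaves indexed by `F(0) × F(0)`: the fibre over `(a, b)` is the hom
presheaf `X(a, b)` of a graph with object set `F(0)`, and conversely a graph `X` gives
`F(c₊) = Σ a b, X(a, b)(c)`. Since `G` is functorial in `V` and preserves equivalences, `GV` is a
presheaf topos whenever `V` is.
-/

open CategoryTheory CategoryTheory.Limits Opposite

universe w v u

namespace Paper

variable {V : Type u} [Category.{v} V]

/-- Morphisms of the category `C₊`: it has the objects of `C` (as `some c`) together with a new
object `0` (as `none`); there are two maps `σ_c, τ_c : 0 ⟶ c₊` for each object `c` of `C`,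
and composition satisfies `f₊ ∘ σ_c = σ_d` and `f₊ ∘ τ_c = τ_d`. -/
inductive PlusHom {C : Type u} [Category.{v} C] : Option C → Option C → Type (max u v)
  | id0 : PlusHom none none
  | sigma (c : C) : PlusHom none (some c)
  | tau (c : C) : PlusHom none (some c)
  | of {c d : C} (f : c ⟶ d) : PlusHom (some c) (some d)

/-- The category `C₊` obtained from `C` by adjoining an object `0` with two maps
`σ_c, τ_c : 0 ⟶ c₊` for each `c`. -/
def CPlus (C : Type u) [Category.{v} C] : Type u := Option C

section CPlusCat

variable {C : Type u} [Category.{v} C]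

/-- Composition in `C₊`. -/
def PlusHom.comp : ∀ {x y z : Option C}, PlusHom x y → PlusHom y z → PlusHom x z
  | _, _, _, .id0, g => g
  | _, _, _, .sigma _, .of _ => .sigma _
  | _, _, _, .tau _, .of _ => .tau _
  | _, _, _, .of f, .of g => .of (f ≫ g)

instance : Category.{max u v} (CPlus C) where
  Hom x y := PlusHom (C := C) x y
  id x := match x with
    | none => .id0
    | some c => .of (𝟙 c)
  comp f g := f.comp g
  id_comp {x y} f := by
    cases f <;> simp [PlusHom.comp]
  comp_id {x y} f := by
    cases f <;> simp [PlusHom.comp]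
  assoc {x y z w} f g h := by
    cases f <;> cases g <;> cases h <;> simp [PlusHom.comp]

end CPlusCat

theorem VGraphHom.mk_congr_homMap {X Y : VGraph.{w} V} {φ : X.objs → Y.objs}
    {m m' : ∀ a b, X.hom a b ⟶ Y.hom (φ a) (φ b)} (h : ∀ a b, m a b = m' a b) :
    VGraphHom.mk φ m = VGraphHom.mk φ m' := by
  obtain rfl : m = m' := funext₂ h
  rfl

namespace VGraph

def isoMk (X : VGraph.{w} V) {H : X.objs → X.objs → V} (e : ∀ a b, X.hom a b ≅ H a b) :
    X ≅ ⟨X.objs, H⟩ where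
  hom := ⟨id, fun a b => (e a b).hom⟩
  inv := ⟨id, fun a b => (e a b).inv⟩
  hom_inv_id := VGraphHom.mk_congr_homMap fun a b => (e a b).hom_inv_id
  inv_hom_id := VGraphHom.mk_congr_homMap fun a b => (e a b).inv_hom_id

section Functoriality

universe v' u'

variable {W : Type u'} [Category.{v'} W]

def map (E : V ⥤ W) : VGraph.{w} V ⥤ VGraph.{w} W where
  obj X := ⟨X.objs, fun a b => E.obj (X.hom a b)⟩
  map f := ⟨f.toFun, fun a b => E.map (f.homMap a b)⟩
  map_id _ := VGraphHom.mk_congr_homMap fun _ _ => E.map_id _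
  map_comp _ _ := VGraphHom.mk_congr_homMap fun _ _ => E.map_comp _ _

def congr (E : V ≌ W) : VGraph.{w} V ≌ VGraph.{w} W where
  functor := map E.functor
  inverse := map E.inverse
  unitIso := NatIso.ofComponents (fun X => isoMk X fun a b => E.unitIso.app (X.hom a b))
    fun f => VGraphHom.mk_congr_homMap fun a b => E.unit.naturality (f.homMap a b)
  counitIso := NatIso.ofComponents
    (fun X => (isoMk X fun a b => (E.counitIso.app (X.hom a b)).symm).symm)
    fun f => VGraphHom.mk_congr_homMap fun a b => E.counit.naturality (f.homMap a b)
  functor_unitIso_comp X := VGraphHom.mk_congr_homMap fun a b =>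
    E.functor_unitIso_comp (X.hom a b)

end Functoriality

end VGraph

section FiberEquivs

universe u₁ u₂

def sigmaSigmaSubtypeEquiv {α : Type u₁} (β : α → α → Type u₂) (a₀ b₀ : α) :
    {p : Σ a b, β a b // p.1 = a₀ ∧ p.2.1 = b₀} ≃ β a₀ b₀ where
  toFun | ⟨⟨_, _, u⟩, rfl, rfl⟩ => u
  invFun u := ⟨⟨a₀, b₀, u⟩, rfl, rfl⟩
  left_inv | ⟨⟨_, _, _⟩, rfl, rfl⟩ => rfl
  right_inv _ := rfl

def sigmaSigmaFiberEquiv {α : Type u₁} {γ : Type u₂} (f g : γ → α) :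
    (Σ a b, {x : γ // f x = a ∧ g x = b}) ≃ γ where
  toFun p := p.2.2.1
  invFun x := ⟨f x, g x, x, rfl, rfl⟩
  left_inv | ⟨_, _, _, rfl, rfl⟩ => rfl
  right_inv _ := rfl

end FiberEquivs

namespace CPlus

variable {C : Type u} [Category.{v} C]

abbrev zero : CPlus C := none

abbrev incl (c : C) : CPlus C := some c

abbrev sigma (c : C) : (zero : CPlus C) ⟶ incl c := PlusHom.sigma c

abbrev tau (c : C) : (zero : CPlus C) ⟶ incl c := PlusHom.tau c

abbrev inclMap {c d : C} (f : c ⟶ d) : incl c ⟶ incl d := PlusHom.of f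

end CPlus

section PlusPresheaves

variable {C : Type v} [SmallCategory C]

section GraphToPresheaf

namespace VGraph

variable (X : VGraph.{v} (Cᵒᵖ ⥤ Type v))

def plusObj : Option C → Type v
  | none => X.objs
  | some c => Σ a b, (X.hom a b).obj (op c)

def plusMap : ∀ {x y : Option C}, PlusHom x y → X.plusObj y → X.plusObj x
  | _, _, .id0 => id
  | _, _, .sigma _ => fun p => p.1
  | _, _, .tau _ => fun p => p.2.1
  | _, _, .of f => fun p => ⟨p.1, p.2.1, (X.hom p.1 p.2.1).map f.op p.2.2⟩

theorem plusMap_id : ∀ x : CPlus C, X.plusMap (𝟙 x) = id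
  | none => rfl
  | some c => funext fun p =>
    show (⟨p.1, p.2.1, (X.hom p.1 p.2.1).map (𝟙 (op c)) p.2.2⟩ : X.plusObj (some c)) = p by
      rw [Functor.map_id_apply]; rfl

theorem plusMap_comp {x y z : Option C} (f : PlusHom x y) (g : PlusHom y z) :
    X.plusMap (f.comp g) = X.plusMap f ∘ X.plusMap g := by
  cases f <;> cases g
  case of.of c _ f _ g =>
    funext p
    exact congrArg (fun t => (⟨p.1, p.2.1, t⟩ : X.plusObj (some c)))
      ((X.hom p.1 p.2.1).map_comp_apply g.op f.op p.2.2)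
  all_goals rfl

def toPlusPresheaf : (CPlus C)ᵒᵖ ⥤ Type v where
  obj x := X.plusObj x.unop
  map g := TypeCat.ofHom (X.plusMap g.unop)
  map_id x := congrArg TypeCat.ofHom (X.plusMap_id x.unop)
  map_comp g h := congrArg TypeCat.ofHom (X.plusMap_comp h.unop g.unop)

end VGraph

namespace VGraphHom

variable {X Y : VGraph.{v} (Cᵒᵖ ⥤ Type v)} (f : VGraphHom X Y)

def plusApp : ∀ x : Option C, X.plusObj x → Y.plusObj x
  | none => f.toFun
  | some c => fun p => ⟨f.toFun p.1, f.toFun p.2.1, (f.homMap p.1 p.2.1).app (op c) p.2.2⟩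

theorem plusApp_plusMap {x y : Option C} (g : PlusHom x y) (p : X.plusObj y) :
    f.plusApp x (X.plusMap g p) = Y.plusMap g (f.plusApp y p) := by
  cases g with
  | @of c _ g =>
    exact congrArg (fun t => (⟨f.toFun p.1, f.toFun p.2.1, t⟩ : Y.plusObj (some c)))
      (NatTrans.naturality_apply (f.homMap p.1 p.2.1) g.op p.2.2)
  | _ => rfl

end VGraphHom

def graphToPlus : VGraph.{v} (Cᵒᵖ ⥤ Type v) ⥤ ((CPlus C)ᵒᵖ ⥤ Type v) where
  obj X := X.toPlusPresheaf
  map f :=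
    { app x := TypeCat.ofHom (f.plusApp x.unop)
      naturality _ _ g := ConcreteCategory.hom_ext _ _ (f.plusApp_plusMap g.unop) }
  map_id _ := NatTrans.ext (funext fun ⟨x⟩ => by cases x <;> rfl)
  map_comp _ _ := NatTrans.ext (funext fun ⟨x⟩ => by cases x <;> rfl)

end GraphToPresheaf

section PresheafToGraph

variable (F : (CPlus C)ᵒᵖ ⥤ Type v)

def fiberPresheaf (a b : F.obj (op CPlus.zero)) : Cᵒᵖ ⥤ Type v where
  obj c := {x : F.obj (op (CPlus.incl c.unop)) //
    F.map (CPlus.sigma c.unop).op x = a ∧ F.map (CPlus.tau c.unop).op x = b}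
  map g := TypeCat.ofHom fun x => ⟨F.map (CPlus.inclMap g.unop).op x.1, by
    simp only [← Functor.map_comp_apply]
    exact x.2⟩
  map_id c := ConcreteCategory.hom_ext _ _ fun x =>
    Subtype.ext (F.map_id_apply (op (CPlus.incl c.unop)) x.1)
  map_comp g h := ConcreteCategory.hom_ext _ _ fun x => Subtype.ext
    (F.map_comp_apply (CPlus.inclMap g.unop).op (CPlus.inclMap h.unop).op x.1)

def toVGraph : VGraph.{v} (Cᵒᵖ ⥤ Type v) := ⟨F.obj (op CPlus.zero), fiberPresheaf F⟩

variable {F} {G : (CPlus C)ᵒᵖ ⥤ Type v} (α : F ⟶ G)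

def fiberPresheafMap (a b : F.obj (op CPlus.zero)) :
    fiberPresheaf F a b ⟶ fiberPresheaf G (α.app _ a) (α.app _ b) where
  app c := TypeCat.ofHom fun x => ⟨α.app _ x.1, by
    simp [← NatTrans.naturality_apply, x.2.1, x.2.2]⟩
  naturality _ _ g := ConcreteCategory.hom_ext _ _ fun x => Subtype.ext
    (NatTrans.naturality_apply α _ x.1)

end PresheafToGraph

def plusToGraph : ((CPlus C)ᵒᵖ ⥤ Type v) ⥤ VGraph.{v} (Cᵒᵖ ⥤ Type v) where
  obj := toVGraph
  map α := ⟨α.app _, fiberPresheafMap α⟩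
  map_id _ := VGraphHom.mk_congr_homMap fun _ _ => by ext; rfl
  map_comp _ _ := VGraphHom.mk_congr_homMap fun _ _ => by ext; rfl

def VGraph.homIsoFiberPresheaf (X : VGraph.{v} (Cᵒᵖ ⥤ Type v)) (a b : X.objs) :
    X.hom a b ≅ fiberPresheaf X.toPlusPresheaf a b :=
  NatIso.ofComponents
    (fun c => (sigmaSigmaSubtypeEquiv (fun a b => (X.hom a b).obj c) a b).symm.toIso)
    fun _ => rfl

def graphToPlusCompIso : 𝟭 (VGraph.{v} (Cᵒᵖ ⥤ Type v)) ≅ graphToPlus ⋙ plusToGraph :=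
  NatIso.ofComponents (fun X => VGraph.isoMk X X.homIsoFiberPresheaf)
    fun _ => VGraphHom.mk_congr_homMap fun _ _ => rfl

def toVGraphToPlusPresheafIso (F : (CPlus C)ᵒᵖ ⥤ Type v) :
    (toVGraph F).toPlusPresheaf ≅ F :=
  NatIso.ofComponents
    (fun
      | op none => Iso.refl _
      | op (some c) =>
        (sigmaSigmaFiberEquiv (F.map (CPlus.sigma c).op) (F.map (CPlus.tau c).op)).toIso)
    fun {x y} g => by
      obtain ⟨x⟩ := x
      obtain ⟨y⟩ := y
      obtain ⟨g : PlusHom y x⟩ := g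
      refine ConcreteCategory.hom_ext _ _ fun p => ?_
      cases g with
      | id0 => exact (F.map_id_apply _ p).symm
      | sigma => exact p.2.2.2.1.symm
      | tau => exact p.2.2.2.2.symm
      | of => rfl

def plusToGraphCompIso : plusToGraph ⋙ graphToPlus ≅ 𝟭 ((CPlus C)ᵒᵖ ⥤ Type v) :=
  NatIso.ofComponents toVGraphToPlusPresheafIso
    fun _ => NatTrans.ext (funext fun ⟨x⟩ => by cases x <;> rfl)

end PlusPresheaves

def graphPlusEquivalence (C : Type v) [SmallCategory C] :
    VGraph.{v} (Cᵒᵖ ⥤ Type v) ≌ ((CPlus C)ᵒᵖ ⥤ Type v) :=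
  .mk graphToPlus plusToGraph graphToPlusCompIso plusToGraphCompIso

/-- For a small category `C`, the category of graphs enriched in presheaves
on `C` is equivalent to the category of presheaves on `C₊`; consequently if `V` is a presheaf
topos then so is `GV`. -/
theorem stmt8 (C : Type v) [SmallCategory C] :
    Nonempty (VGraph.{v} (Cᵒᵖ ⥤ Type v) ≌ ((CPlus C)ᵒᵖ ⥤ Type v)) ∧
      (∀ (V : Type u) [Category.{v} V] (D : Type v) [SmallCategory D],
        (V ≌ (Dᵒᵖ ⥤ Type v)) → Nonempty (VGraph.{v} V ≌ ((CPlus D)ᵒᵖ ⥤ Type v))) :=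
  ⟨⟨graphPlusEquivalence C⟩, fun _ _ D _ E =>
    ⟨(VGraph.congr E).trans (graphPlusEquivalence D)⟩⟩

end Paper
end

section
/- Let A be a category with finite products such that for an object a, the slice A/a has finite products. Then the n-fold composition of spans functor (A/(a×a))ⁿ → A/(a×a), given by pullback-composition of endospans of a, is a local right adjoint for every n ∈ ℕ. -/
/-!
Call `F` a local right adjoint when every `Over.post F : C/X ⥤ D/F X` is a right adjoint. This
is stable under composition and products, holds for right adjoints (in particular equivalences),
and can be cancelled against `Over.forget`, whose induced functors on slices are the iterated
slice equivalences. The binary product functor `C × C ⥤ C` is a local right adjoint: on the slice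
over `(X, Y)` it is `(f, g) ↦ f × g`, right adjoint to `h ↦ (h ≫ fst, h ≫ snd)`.
Binary span composition followed by `Over.forget (a ⨯ a)` is
`(Over.map snd × Over.map fst) ⋙ (binary product in A/a) ⋙ Over.forget a`, hence a local right
adjoint, and the `n`-fold composite is assembled from it by induction. For `n = 0` the slice
functor is constant at a terminal object, out of a slice with an initial object.
-/

open CategoryTheory CategoryTheory.Limits

universe v u

namespace Paper

variable {A : Type u} [Category.{v} A]

/-- Binary composition of endospans of `a`, computed via the binary product in `A/a`
(which is the pullback composing the spans). -/
noncomputable def binSpanComp [HasFiniteProducts A] (a : A) [HasFiniteProducts (Over a)] :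
    Over (a ⨯ a) × Over (a ⨯ a) ⥤ Over (a ⨯ a) where
  obj S := Over.mk
    (prod.lift
      ((Limits.prod.fst :
          (Over.mk (S.1.hom ≫ Limits.prod.snd) ⨯ Over.mk (S.2.hom ≫ Limits.prod.fst)) ⟶ _).left ≫
        S.1.hom ≫ Limits.prod.fst)
      ((Limits.prod.snd :
          (Over.mk (S.1.hom ≫ Limits.prod.snd) ⨯ Over.mk (S.2.hom ≫ Limits.prod.fst)) ⟶ _).left ≫
        S.2.hom ≫ Limits.prod.snd))
  map {S T} f := Over.homMk
    (Limits.prod.map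
      (Over.homMk f.1.left (by dsimp; rw [← Category.assoc, Over.w]) :
        Over.mk (S.1.hom ≫ Limits.prod.snd) ⟶ Over.mk (T.1.hom ≫ Limits.prod.snd))
      (Over.homMk f.2.left (by dsimp; rw [← Category.assoc, Over.w]) :
        Over.mk (S.2.hom ≫ Limits.prod.fst) ⟶ Over.mk (T.2.hom ≫ Limits.prod.fst))).left
    (by
      dsimp
      ext
      · rw [Category.assoc, prod.lift_fst, prod.lift_fst, ← Over.comp_left_assoc, prod.map_fst,
          Over.comp_left_assoc]
        dsimp
        erw [← Category.assoc (Over.Hom.left f.1), Over.w f.1]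
        try simp only [Category.assoc]
      · rw [Category.assoc, prod.lift_snd, prod.lift_snd, ← Over.comp_left_assoc, prod.map_snd,
          Over.comp_left_assoc]
        dsimp
        erw [← Category.assoc (Over.Hom.left f.2), Over.w f.2]
        try simp only [Category.assoc])
  map_id S := by
    apply Over.OverMorphism.ext
    dsimp
    have h : Limits.prod.map
        (Over.homMk (𝟙 S.1.left) (by simp) :
          Over.mk (S.1.hom ≫ Limits.prod.snd) ⟶ Over.mk (S.1.hom ≫ Limits.prod.snd))
        (Over.homMk (𝟙 S.2.left) (by simp) :
          Over.mk (S.2.hom ≫ Limits.prod.fst) ⟶ Over.mk (S.2.hom ≫ Limits.prod.fst)) = 𝟙 _ := by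
      apply Limits.prod.hom_ext <;> apply Over.OverMorphism.ext <;> simp
    exact congrArg (fun k => k.left) h
  map_comp {S T U} f g := by
    apply Over.OverMorphism.ext
    dsimp
    have h : Limits.prod.map
        (Over.homMk (f.1.left ≫ g.1.left)
          (by dsimp; rw [Category.assoc, ← Category.assoc g.1.left, Over.w, ← Category.assoc, Over.w]) :
          Over.mk (S.1.hom ≫ Limits.prod.snd) ⟶ Over.mk (U.1.hom ≫ Limits.prod.snd))
        (Over.homMk (f.2.left ≫ g.2.left)
          (by dsimp; rw [Category.assoc, ← Category.assoc g.2.left, Over.w, ← Category.assoc, Over.w]) :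
          Over.mk (S.2.hom ≫ Limits.prod.fst) ⟶ Over.mk (U.2.hom ≫ Limits.prod.fst)) =
        (Limits.prod.map
          (Over.homMk f.1.left (by dsimp; rw [← Category.assoc, Over.w]) :
            Over.mk (S.1.hom ≫ Limits.prod.snd) ⟶ Over.mk (T.1.hom ≫ Limits.prod.snd))
          (Over.homMk f.2.left (by dsimp; rw [← Category.assoc, Over.w]) :
            Over.mk (S.2.hom ≫ Limits.prod.fst) ⟶ Over.mk (T.2.hom ≫ Limits.prod.fst))) ≫
        (Limits.prod.map
          (Over.homMk g.1.left (by dsimp; rw [← Category.assoc, Over.w]) :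
            Over.mk (T.1.hom ≫ Limits.prod.snd) ⟶ Over.mk (U.1.hom ≫ Limits.prod.snd))
          (Over.homMk g.2.left (by dsimp; rw [← Category.assoc, Over.w]) :
            Over.mk (T.2.hom ≫ Limits.prod.fst) ⟶ Over.mk (U.2.hom ≫ Limits.prod.fst))) := by
      apply Limits.prod.hom_ext <;> apply Over.OverMorphism.ext <;> simp
    exact congrArg (fun k => k.left) h

/-- `n`-fold composition of endospans of `a`, as a functor `(A/(a×a))ⁿ ⥤ A/(a×a)`.
For `n = 0` it is constant at the identity span (the diagonal). -/
noncomputable def spanCompN [HasFiniteProducts A] (a : A) [HasFiniteProducts (Over a)] :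
    ∀ n : ℕ, ((Fin n → Over (a ⨯ a)) ⥤ Over (a ⨯ a))
  | 0 => (Functor.const _).obj (Over.mk (prod.lift (𝟙 a) (𝟙 a)))
  | n + 1 =>
      Functor.prod' (Pi.comap (fun _ : Fin (n + 1) => Over (a ⨯ a)) Fin.castSucc ⋙ spanCompN a n)
        (Pi.eval _ (Fin.last n)) ⋙ binSpanComp a

section LocalRightAdjoint

variable {C : Type*} [Category C] {D : Type*} [Category D] {E : Type*} [Category E]

def IsLocalRightAdjoint (F : C ⥤ D) : Prop :=
  ∀ X : C, (Over.post F (X := X)).IsRightAdjoint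

lemma IsLocalRightAdjoint.comp {F : C ⥤ D} {G : D ⥤ E} (hF : IsLocalRightAdjoint F)
    (hG : IsLocalRightAdjoint G) : IsLocalRightAdjoint (F ⋙ G) := fun X =>
  have := hF X
  have := hG (F.obj X)
  inferInstanceAs (Over.post F ⋙ Over.post G).IsRightAdjoint

lemma isLocalRightAdjoint_of_isRightAdjoint (F : C ⥤ D) [F.IsRightAdjoint] :
    IsLocalRightAdjoint F := fun _ => inferInstance

lemma isLocalRightAdjoint_id : IsLocalRightAdjoint (𝟭 C) :=
  isLocalRightAdjoint_of_isRightAdjoint _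

lemma IsLocalRightAdjoint.of_comp_of_isEquivalence {F : C ⥤ D} {G : D ⥤ E}
    (hFG : IsLocalRightAdjoint (F ⋙ G)) (hG : ∀ Y : D, (Over.post G (X := Y)).IsEquivalence) :
    IsLocalRightAdjoint F := fun X =>
  have := hFG X
  (Functor.isRightAdjoint_comp_iff_left (Over.post F) (Over.post G)).mp
    (inferInstanceAs (Over.post (F ⋙ G)).IsRightAdjoint)

instance Over.isEquivalence_post_forget (X : C) (f : Over X) :
    (Over.post (Over.forget X) (X := f)).IsEquivalence :=
  (Over.iteratedSliceEquiv f).isEquivalence_functor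

lemma isLocalRightAdjoint_forget (X : C) : IsLocalRightAdjoint (Over.forget X) := fun _ =>
  inferInstance

lemma isLocalRightAdjoint_map {X Y : C} (f : X ⟶ Y) : IsLocalRightAdjoint (Over.map f) :=
  IsLocalRightAdjoint.of_comp_of_isEquivalence (G := Over.forget Y) (isLocalRightAdjoint_forget X)
    inferInstance

end LocalRightAdjoint

section Products

universe v₁ u₁ v₂ u₂

variable {C₁ C₂ : Type u₁} [Category.{v₁} C₁] [Category.{v₁} C₂]
  {D₁ D₂ : Type u₂} [Category.{v₂} D₁] [Category.{v₂} D₂]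

def Adjunction.prod {L₁ : C₁ ⥤ D₁} {R₁ : D₁ ⥤ C₁} {L₂ : C₂ ⥤ D₂} {R₂ : D₂ ⥤ C₂}
    (adj₁ : L₁ ⊣ R₁) (adj₂ : L₂ ⊣ R₂) : L₁.prod L₂ ⊣ R₁.prod R₂ :=
  Adjunction.mkOfHomEquiv
    { homEquiv := fun X Y => (adj₁.homEquiv X.1 Y.1).prodCongr (adj₂.homEquiv X.2 Y.2)
      homEquiv_naturality_left_symm := fun f g => Prod.ext
        (adj₁.homEquiv_naturality_left_symm f.1 g.1)
        (adj₂.homEquiv_naturality_left_symm f.2 g.2)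
      homEquiv_naturality_right := fun f g => Prod.ext
        (adj₁.homEquiv_naturality_right f.1 g.1)
        (adj₂.homEquiv_naturality_right f.2 g.2) }

instance Functor.isRightAdjoint_prod (R₁ : D₁ ⥤ C₁) (R₂ : D₂ ⥤ C₂)
    [R₁.IsRightAdjoint] [R₂.IsRightAdjoint] : (R₁.prod R₂).IsRightAdjoint :=
  (Adjunction.prod (.ofIsRightAdjoint R₁) (.ofIsRightAdjoint R₂)).isRightAdjoint

def Over.prodEquiv (X : C₁) (Y : C₂) : Over ((X, Y) : C₁ × C₂) ≌ Over X × Over Y where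
  functor := (Over.post (CategoryTheory.Prod.fst C₁ C₂)).prod'
    (Over.post (CategoryTheory.Prod.snd C₁ C₂))
  inverse :=
    { obj := fun p => Over.mk ((p.1.hom, p.2.hom) : (p.1.left, p.2.left) ⟶ (X, Y))
      map := fun u => Over.homMk (u.1.left, u.2.left) (Prod.ext (Over.w u.1) (Over.w u.2)) }
  unitIso := Iso.refl _
  counitIso := Iso.refl _
  functor_unitIso_comp _ := (Category.comp_id _).trans (CategoryTheory.Functor.map_id _ _)

lemma IsLocalRightAdjoint.prod {F : C₁ ⥤ D₁} {G : C₂ ⥤ D₂} (hF : IsLocalRightAdjoint F)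
    (hG : IsLocalRightAdjoint G) : IsLocalRightAdjoint (F.prod G) := fun X =>
  have := hF X.1
  have := hG X.2
  inferInstanceAs ((Over.prodEquiv X.1 X.2).functor ⋙ (Over.post F).prod (Over.post G) ⋙
    (Over.prodEquiv (F.obj X.1) (G.obj X.2)).inverse).IsRightAdjoint

end Products

section BinaryProducts

variable {C : Type u} [Category.{v} C] [HasBinaryProducts C]

noncomputable def prodFunctor : C × C ⥤ C where
  obj p := p.1 ⨯ p.2
  map f := prod.map f.1 f.2

-- Reducible, so that `((prodMap X Y).obj p).left` unfolds to `p.1.left ⨯ p.2.left` for `rw`.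
@[reducible]
noncomputable def Over.prodMap (X Y : C) : Over X × Over Y ⥤ Over (X ⨯ Y) where
  obj p := Over.mk (prod.map p.1.hom p.2.hom)
  map u := Over.homMk (prod.map u.1.left u.2.left)

noncomputable def Over.prodMapAdjunction (X Y : C) :
    (Over.map prod.fst).prod' (Over.map prod.snd) ⊣ Over.prodMap X Y :=
  Adjunction.mkOfHomEquiv
    { homEquiv := fun Z p =>
        { toFun := fun u => Over.homMk (prod.lift u.1.left u.2.left) (by
            show prod.lift u.1.left u.2.left ≫ prod.map p.1.hom p.2.hom = Z.hom
            apply prod.hom_ext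
            · rw [Category.assoc, prod.map_fst, prod.lift_fst_assoc]; exact Over.w u.1
            · rw [Category.assoc, prod.map_snd, prod.lift_snd_assoc]; exact Over.w u.2)
          invFun := fun w =>
            (Over.homMk (w.left ≫ prod.fst) (by simpa using Over.w w =≫ prod.fst),
             Over.homMk (w.left ≫ prod.snd) (by simpa using Over.w w =≫ prod.snd))
          left_inv := fun u => by ext; exacts [prod.lift_fst _ _, prod.lift_snd _ _]
          right_inv := fun w => by
            ext; apply prod.hom_ext; exacts [prod.lift_fst _ _, prod.lift_snd _ _] } }

lemma isLocalRightAdjoint_prodFunctor : IsLocalRightAdjoint (prodFunctor (C := C)) := fun X =>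
  have := (Over.prodMapAdjunction X.1 X.2).isRightAdjoint
  inferInstanceAs ((Over.prodEquiv X.1 X.2).functor ⋙ Over.prodMap X.1 X.2).IsRightAdjoint

end BinaryProducts

section Trivial

variable {C : Type*} [Category C] {D : Type*} [Category D]

lemma isRightAdjoint_of_isTerminal_obj [HasInitial C] (R : C ⥤ D)
    (hR : ∀ c, IsTerminal (R.obj c)) : R.IsRightAdjoint :=
  (Adjunction.mkOfHomEquiv (F := (Functor.const D).obj (⊥_ C)) (G := R)
    { homEquiv := fun d c =>
        { toFun := fun _ => (hR c).from d
          invFun := fun _ => initial.to c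
          left_inv := fun _ => initial.hom_ext _ _
          right_inv := fun _ => (hR c).hom_ext _ _ }
      homEquiv_naturality_left_symm := fun _ _ => initial.hom_ext _ _
      homEquiv_naturality_right := fun _ _ => (hR _).hom_ext _ _ }).isRightAdjoint

lemma isLocalRightAdjoint_const [∀ X : C, HasInitial (Over X)] (d : D) :
    IsLocalRightAdjoint ((Functor.const C).obj d) := fun _ =>
  isRightAdjoint_of_isTerminal_obj _ fun _ => Over.mkIdTerminal

instance Over.hasInitial_of_isEmpty {ι : Type*} [IsEmpty ι] (X : ι → C) : HasInitial (Over X) :=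
  (IsInitial.ofUniqueHom (X := Over.mk (𝟙 X))
    (fun _ => Over.homMk isEmptyElim (funext fun i => isEmptyElim i))
    fun _ _ => by ext i; exact isEmptyElim i).hasInitial

end Trivial

section SplitLast

variable (C : Type*) [Category C] (n : ℕ)

def splitLast : (Fin (n + 1) → C) ⥤ (Fin n → C) × C :=
  (Pi.comap (fun _ => C) Fin.castSucc).prod' (Pi.eval _ (Fin.last n))

instance : (splitLast C n).Faithful where
  map_injective {X Y} f g h := by
    funext i
    induction i using Fin.lastCases with
    | last => exact congrArg Prod.snd h
    | cast j => exact congrFun (congrArg Prod.fst h) j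

instance : (splitLast C n).Full where
  map_surjective {X Y} u :=
    ⟨fun i => Fin.lastCases (motive := fun i => X i ⟶ Y i) u.2 u.1 i, by
      refine Prod.ext (funext fun j => ?_) ?_
      · exact Fin.lastCases_castSucc (motive := fun i => X i ⟶ Y i) _
      · exact Fin.lastCases_last (motive := fun i => X i ⟶ Y i)⟩

instance : (splitLast C n).EssSurj where
  mem_essImage p :=
    ⟨Fin.snoc (α := fun _ => C) p.1 p.2,
      ⟨eqToIso (Prod.ext (funext fun _ => Fin.snoc_castSucc (α := fun _ => C) ..)
        (Fin.snoc_last (α := fun _ => C) ..))⟩⟩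

instance : (splitLast C n).IsEquivalence where

end SplitLast

section SpanComposition

variable [HasFiniteProducts A] (a : A) [HasFiniteProducts (Over a)]

lemma binSpanComp_comp_forget : binSpanComp a ⋙ Over.forget (a ⨯ a) =
    (Over.map prod.snd).prod (Over.map prod.fst) ⋙ prodFunctor ⋙ Over.forget a :=
  rfl

lemma isLocalRightAdjoint_binSpanComp : IsLocalRightAdjoint (binSpanComp a) := by
  refine .of_comp_of_isEquivalence (G := Over.forget (a ⨯ a)) ?_ inferInstance
  rw [binSpanComp_comp_forget]
  exact ((isLocalRightAdjoint_map _).prod (isLocalRightAdjoint_map _)).comp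
    (isLocalRightAdjoint_prodFunctor.comp (isLocalRightAdjoint_forget a))

lemma spanCompN_succ (n : ℕ) : spanCompN a (n + 1) =
    splitLast _ n ⋙ (spanCompN a n).prod (𝟭 _) ⋙ binSpanComp a :=
  rfl

lemma isLocalRightAdjoint_spanCompN : ∀ n, IsLocalRightAdjoint (spanCompN a n)
  | 0 => isLocalRightAdjoint_const _
  | n + 1 => by
    rw [spanCompN_succ]
    exact (isLocalRightAdjoint_of_isRightAdjoint _).comp
      (((isLocalRightAdjoint_spanCompN n).prod isLocalRightAdjoint_id).comp
        (isLocalRightAdjoint_binSpanComp a))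

end SpanComposition

/-- For `A` with finite products and `a : A` such that `A/a` has finite
products, the `n`-fold pullback-composition of endospans of `a` is a local right adjoint,
for every `n`. -/
theorem stmt12 [HasFiniteProducts A] (a : A) [HasFiniteProducts (Over a)] (n : ℕ) :
    ∀ X : Fin n → Over (a ⨯ a), (Over.post (spanCompN a n) (X := X)).IsRightAdjoint :=
  isLocalRightAdjoint_spanCompN a n

end Paper
end

section
/- Let F : A → B be a local left adjoint, where A is cocomplete and has a set C of connected components each possessing an initial object, and B is locally small. Then for any functor G : A → D into a category D with coproducts, the left Kan extension L of G along F exists and is given by L(b) = ∐_{c ∈ C} ∐_{f : F(0_c) → b} G(a_f), where 0_c is the initial object of component c and F(0_c) → F(a_f) → b is a chosen cogeneric factorization of f. -/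
open CategoryTheory CategoryTheory.Limits

universe v₁ v₂ v₃ u₁ u₂ u₃

namespace Paper

/-- A functor is a local left adjoint when all the induced functors between coslices are
left adjoints. -/
def IsLocalLeftAdjoint {A : Type u₁} [Category.{v₁} A] {B : Type u₂} [Category.{v₂} B]
    (F : A ⥤ B) : Prop :=
  ∀ a : A, (Under.post F (X := a)).IsLeftAdjoint

/-- A map `g : F a ⟶ b` is cogeneric when, as an object of the comma category `F/b`, it is
terminal in its connected component. -/
def IsCogenericObj {A : Type u₁} [Category.{v₁} A] {B : Type u₂} [Category.{v₂} B]
    {F : A ⥤ B} {b : B} (g : CostructuredArrow F b) : Prop :=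
  Nonempty (IsTerminal (⟨g, rfl⟩ : ConnectedComponents.Component (Quotient.mk'' g)))

/-!
The pointwise left Kan extension at `b` is the colimit of `G` over the comma category `F/b`.
An object `x : F a ⟶ b` of `F/b` is connected to its restriction `F 0_c ⟶ F a ⟶ b` along the
initial object of the component `c` of `a`, hence to the cogeneric factorization of that
restriction, which is terminal in its component. So the components of `F/b` are indexed by the
pairs `(c, f : F 0_c ⟶ b)`, each has a terminal object, and a colimit over such a category is the
coproduct of the values at these terminal objects.
-/
section Components

variable {J : Type*} [Category J] {c : ConnectedComponents J}

lemma IsTerminal.hom_ext_of_component {t : J} {h : Quotient.mk'' t = c}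
    (ht : IsTerminal (⟨t, h⟩ : c.Component)) {j : J} (f g : j ⟶ t) : f = g := by
  have hj : Quotient.mk'' j = c := (Quotient.sound' (Zigzag.of_hom f)).trans h
  exact congrArg InducedCategory.Hom.hom
    (ht.hom_ext (Y := (⟨j, hj⟩ : c.Component))
      (ObjectProperty.homMk f) (ObjectProperty.homMk g))

noncomputable def IsTerminal.fromOfComponent {t : J} {h : Quotient.mk'' t = c}
    (ht : IsTerminal (⟨t, h⟩ : c.Component)) {j : J} (hj : Quotient.mk'' j = c) :
    j ⟶ t :=
  (ht.from ⟨j, hj⟩).hom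

lemma IsInitial.hom_ext_of_component {i : J} {h : Quotient.mk'' i = c}
    (hi : IsInitial (⟨i, h⟩ : c.Component)) {a : J} (f g : i ⟶ a) : f = g := by
  have ha : Quotient.mk'' a = c := (Quotient.sound' (Zigzag.of_hom f)).symm.trans h
  exact congrArg InducedCategory.Hom.hom
    (hi.hom_ext (Y := (⟨a, ha⟩ : c.Component))
      (ObjectProperty.homMk f) (ObjectProperty.homMk g))

noncomputable def IsInitial.toOfComponent {i : J} {h : Quotient.mk'' i = c}
    (hi : IsInitial (⟨i, h⟩ : c.Component)) {a : J} (ha : Quotient.mk'' a = c) :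
    i ⟶ a :=
  (hi.to ⟨a, ha⟩).hom

end Components

/-- `hom_ext` says that `obj p` is terminal in its connected component: a morphism `j ⟶ obj p`
already places `j` in that component. -/
structure ComponentTerminals (J : Type*) [Category J] (P : Type*) where
  obj : P → J
  component : J → P
  component_eq_of_hom {j j' : J} : (j ⟶ j') → component j = component j'
  component_obj (p : P) : component (obj p) = p
  toObj (j : J) : j ⟶ obj (component j)
  hom_ext {j : J} {p : P} (f g : j ⟶ obj p) : f = g

namespace ComponentTerminals

variable {J : Type*} [Category J] {P : Type*} (T : ComponentTerminals J P)
  {C : Type*} [Category C] (K : J ⥤ C) [HasCoproduct fun p => K.obj (T.obj p)]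

lemma map_comp_ι {j : J} {p : P} (f : j ⟶ T.obj p) :
    K.map f ≫ Sigma.ι (fun p => K.obj (T.obj p)) p =
      K.map (T.toObj j) ≫ Sigma.ι (fun p => K.obj (T.obj p)) (T.component j) := by
  obtain rfl : T.component j = p := (T.component_eq_of_hom f).trans (T.component_obj p)
  rw [T.hom_ext f (T.toObj j)]

@[simps]
noncomputable def cocone : Cocone K where
  pt := ∐ fun p => K.obj (T.obj p)
  ι :=
    { app j := K.map (T.toObj j) ≫ Sigma.ι (fun p => K.obj (T.obj p)) (T.component j)
      naturality {j j'} m := by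
        simp only [Functor.const_obj_obj, Functor.const_obj_map, Category.comp_id]
        rw [← Category.assoc, ← K.map_comp, T.map_comp_ι] }

lemma cocone_ι_app_obj (p : P) :
    (T.cocone K).ι.app (T.obj p) = Sigma.ι (fun p => K.obj (T.obj p)) p := by
  rw [cocone_ι_app, ← T.map_comp_ι K (𝟙 _), K.map_id, Category.id_comp]

noncomputable def isColimit : IsColimit (T.cocone K) where
  desc s := Sigma.desc fun p => s.ι.app (T.obj p)
  fac s j := by
    dsimp only [cocone]
    rw [Category.assoc, Sigma.ι_desc]
    exact s.w (T.toObj j)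
  uniq s m hm := Sigma.hom_ext _ _ fun p => by
    rw [Sigma.ι_desc, ← hm, cocone_ι_app_obj]
    rfl

end ComponentTerminals

section CostructuredArrow

variable {A : Type u₁} [Category.{v₁} A] {B : Type u₂} [Category.{v₂} B]
  {F : A ⥤ B} {b : B}
  {O : ConnectedComponents A → A}
  (hO : ∀ c : ConnectedComponents A, ∃ h : Quotient.mk'' (O c) = c,
    Nonempty (IsInitial (⟨O c, h⟩ : ConnectedComponents.Component c)))

noncomputable def initialTo {c : ConnectedComponents A} {a : A} (ha : Quotient.mk'' a = c) :
    O c ⟶ a :=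
  IsInitial.toOfComponent (hO c).choose_spec.some ha

lemma eq_initialTo {c : ConnectedComponents A} {a : A} (ha : Quotient.mk'' a = c)
    (f : O c ⟶ a) : f = initialTo hO ha :=
  IsInitial.hom_ext_of_component (hO c).choose_spec.some _ _

noncomputable def componentIndex (x : CostructuredArrow F b) :
    Σ c : ConnectedComponents A, F.obj (O c) ⟶ b :=
  ⟨Quotient.mk'' x.left, F.map (initialTo hO rfl) ≫ x.hom⟩

lemma componentIndex_eq (x : CostructuredArrow F b) {c : ConnectedComponents A}
    (h : Quotient.mk'' x.left = c) :
    componentIndex hO x = ⟨c, F.map (initialTo hO h) ≫ x.hom⟩ := by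
  subst h
  rfl

lemma componentIndex_eq_of_hom {x y : CostructuredArrow F b} (m : x ⟶ y) :
    componentIndex hO x = componentIndex hO y := by
  have hxy : Quotient.mk'' x.left = (componentIndex hO y).1 :=
    Quotient.sound' (Zigzag.of_hom m.left)
  rw [componentIndex_eq hO x hxy]
  refine Sigma.ext rfl (heq_of_eq ?_)
  rw [← CostructuredArrow.w m, ← Category.assoc, ← F.map_comp]
  exact congrArg (fun f => F.map f ≫ y.hom) (eq_initialTo hO rfl _)

variable (fact : ∀ (b : B) (c : ConnectedComponents A) (f : F.obj (O c) ⟶ b),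
  Σ' (a : A) (h : O c ⟶ a) (g : F.obj a ⟶ b),
    F.map h ≫ g = f ∧ IsCogenericObj (CostructuredArrow.mk g))

lemma zigzag_cogenericFactor (x : CostructuredArrow F b) :
    Zigzag x (CostructuredArrow.mk (fact b _ (componentIndex hO x).2).2.2.1) :=
  let p := componentIndex hO x
  Zigzag.of_inv_hom
    (CostructuredArrow.homMk (initialTo hO rfl) rfl : CostructuredArrow.mk p.2 ⟶ x)
    (CostructuredArrow.homMk (fact b p.1 p.2).2.1 (fact b p.1 p.2).2.2.2.1)

noncomputable def componentTerminals (b : B) :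
    ComponentTerminals (CostructuredArrow F b)
      (Σ c : ConnectedComponents A, F.obj (O c) ⟶ b) where
  obj p := CostructuredArrow.mk (fact b p.1 p.2).2.2.1
  component := componentIndex hO
  component_eq_of_hom := componentIndex_eq_of_hom hO
  component_obj := by
    rintro ⟨c, f⟩
    have hc : Quotient.mk'' (fact b c f).1 = c :=
      (Quotient.sound' (Zigzag.of_hom (fact b c f).2.1)).symm.trans (hO c).choose
    rw [componentIndex_eq hO _ hc]
    refine Sigma.ext rfl (heq_of_eq ?_)
    rw [← eq_initialTo hO hc (fact b c f).2.1]
    exact (fact b c f).2.2.2.1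
  toObj x := IsTerminal.fromOfComponent (fact b _ _).2.2.2.2.some
    (Quotient.sound' (zigzag_cogenericFactor hO fact x))
  hom_ext {x p} f g := IsTerminal.hom_ext_of_component (fact b p.1 p.2).2.2.2.2.some f g

end CostructuredArrow

theorem stmt13_general {A : Type u₁} [Category.{v₁} A] {B : Type u₂} [Category.{v₂} B]
    {D : Type u₃} [Category.{v₃} D]
    (F : A ⥤ B) (G : A ⥤ D)
    [HasCoproducts.{max u₁ v₂} D]
    (O : ConnectedComponents A → A)
    (hO : ∀ c : ConnectedComponents A, ∃ h : Quotient.mk'' (O c) = c,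
      Nonempty (IsInitial (⟨O c, h⟩ : ConnectedComponents.Component c)))
    (fact : ∀ (b : B) (c : ConnectedComponents A) (f : F.obj (O c) ⟶ b),
      Σ' (a : A) (h : O c ⟶ a) (g : F.obj a ⟶ b),
        F.map h ≫ g = f ∧ IsCogenericObj (CostructuredArrow.mk g)) :
    ∃ hkan : F.HasLeftKanExtension G,
      ∀ b : B,
        letI : F.HasLeftKanExtension G := hkan
        Nonempty ((F.leftKanExtension G).obj b ≅
          ∐ (fun p : Σ c : ConnectedComponents A, F.obj (O c) ⟶ b =>
            G.obj (fact b p.1 p.2).1)) := by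
  let colim (b : B) := (componentTerminals hO fact b).isColimit (CostructuredArrow.proj F b ⋙ G)
  have : F.HasPointwiseLeftKanExtension G := fun b => HasColimit.mk ⟨_, colim b⟩
  exact ⟨inferInstance, fun b => ⟨IsColimit.coconePointUniqueUpToIso
    (Functor.isPointwiseLeftKanExtensionOfIsLeftKanExtension (F.leftKanExtension G)
      (F.leftKanExtensionUnit G) b) (colim b)⟩⟩

/-- Let `F : A ⥤ B` be a local left adjoint, where `A` is cocomplete and
each connected component of `A` has an initial object, and `B` is locally small. Then for
any `G : A ⥤ D` with `D` having coproducts, the left Kan extension `L` of `G` along `F`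
exists and is given by the formula
`L b = ∐_{c} ∐_{f : F 0_c ⟶ b} G (a_f)`,
where `0_c` is the initial object of the component `c` and
`F 0_c ⟶ F (a_f) ⟶ b` is a chosen cogeneric factorisation of `f`. -/
theorem stmt13 {A : Type u₁} [Category.{v₁} A] {B : Type u₂} [Category.{v₂} B]
    {D : Type u₃} [Category.{v₃} D]
    (F : A ⥤ B) (G : A ⥤ D)
    [HasColimits A] [HasCoproducts.{max u₁ v₂} D]
    (hF : IsLocalLeftAdjoint F)
    (O : ConnectedComponents A → A)
    (hO : ∀ c : ConnectedComponents A, ∃ h : Quotient.mk'' (O c) = c,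
      Nonempty (IsInitial (⟨O c, h⟩ : ConnectedComponents.Component c)))
    (fact : ∀ (b : B) (c : ConnectedComponents A) (f : F.obj (O c) ⟶ b),
      Σ' (a : A) (h : O c ⟶ a) (g : F.obj a ⟶ b),
        F.map h ≫ g = f ∧ IsCogenericObj (CostructuredArrow.mk g)) :
    ∃ hkan : F.HasLeftKanExtension G,
      ∀ b : B,
        letI : F.HasLeftKanExtension G := hkan
        Nonempty ((F.leftKanExtension G).obj b ≅
          ∐ (fun p : Σ c : ConnectedComponents A, F.obj (O c) ⟶ b =>
            G.obj (fact b p.1 p.2).1)) :=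
  stmt13_general F G O hO fact

end Paper
end

section
/- Let F : V₁ × … × Vₙ → W be a functor. If F preserves reflexive coequalisers in each variable separately, then F preserves reflexive coequalisers. -/
/-!
By induction on `n`: splitting off the first factor, `∏ⱼ Vⱼ ≌ V₀ × ∏ⱼ Vⱼ₊₁`, reduces the claim to
a bifunctor `F : C × D ⥤ W`. Coequalisers in `C × D` are computed componentwise, so let
`(f₁, f₂), (g₁, g₂)` be a reflexive pair with common section `(s₁, s₂)` and coequalisers `π₁, π₂`.
Then `F(π₁, π₂) = F(π₁, 1) ≫ F(1, π₂)` is a composite of coequalisers of `F(f₁, 1), F(g₁, 1)` and of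
`F(1, f₂), F(1, g₂)`. A map `h` coequalising `F(f₁, f₂), F(g₁, g₂)` descends along `F(π₁, 1)`
because `F(f₁, 1) = F(1, s₂) ≫ F(f₁, f₂)`; the descended map `k` descends along `F(1, π₂)` because
`F(π₁, 1) ≫ F(1, f₂) = F(s₁, 1) ≫ F(f₁, f₂) ≫ F(π₁, 1)` and `F(π₁, 1)` is an epimorphism.
-/

open CategoryTheory CategoryTheory.Limits

universe w v u

namespace Paper

/-- A functor preserves reflexive coequalisers when it preserves coequalisers of all
reflexive pairs. -/
def PreservesReflexiveCoequalizers {C : Type u} [Category.{v} C] {D : Type u} [Category.{w} D]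
    (F : C ⥤ D) : Prop :=
  ∀ {A B : C} (f g : A ⟶ B), IsReflexivePair f g →
    Nonempty (PreservesColimit (parallelPair f g) F)

variable {n : ℕ} {V : Fin n → Type u} [∀ i, Category.{v} (V i)]

/-- The functor `V i ⥤ ∏_j V j` fixing the components other than `i` at the objects `X j`. -/
def insertFunctor (X : ∀ j, V j) (i : Fin n) : V i ⥤ (∀ j, V j) where
  obj Y := Function.update X i Y
  map {Y Y'} f := fun j =>
    if h : j = i then by
      subst h
      exact eqToHom (by simp) ≫ f ≫ eqToHom (by simp)
    else
      eqToHom (show Function.update X i Y j = Function.update X i Y' j by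
        rw [Function.update_of_ne h, Function.update_of_ne h])
  map_id Y := by
    funext j
    dsimp
    by_cases h : j = i
    · subst h
      rw [dif_pos rfl]
      simp
    · rw [dif_neg h]
  map_comp {Y₁ Y₂ Y₃} f g := by
    funext j
    dsimp
    by_cases h : j = i
    · subst h
      rw [dif_pos rfl, dif_pos rfl, dif_pos rfl]
      simp
    · rw [dif_neg h, dif_neg h, dif_neg h]
      simp

lemma insertFunctor_obj_self (X : ∀ j, V j) (i : Fin n) (Y : V i) :
    (insertFunctor X i).obj Y i = Y :=
  Function.update_self i Y X

lemma insertFunctor_obj_of_ne (X : ∀ j, V j) {i j : Fin n} (h : j ≠ i) (Y : V i) :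
    (insertFunctor X i).obj Y j = X j :=
  Function.update_of_ne h Y X

lemma insertFunctor_map_self (X : ∀ j, V j) (i : Fin n) {Y Y' : V i} (φ : Y ⟶ Y') :
    (insertFunctor X i).map φ i =
      eqToHom (insertFunctor_obj_self X i Y) ≫ φ ≫ eqToHom (insertFunctor_obj_self X i Y').symm :=
  dif_pos rfl

lemma insertFunctor_map_of_ne (X : ∀ j, V j) {i j : Fin n} (h : j ≠ i) {Y Y' : V i} (φ : Y ⟶ Y') :
    (insertFunctor X i).map φ j = eqToHom ((insertFunctor_obj_of_ne X h Y).trans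
      (insertFunctor_obj_of_ne X h Y').symm) :=
  dif_neg h

def insertFunctorCompEvalSelf (X : ∀ j, V j) (i : Fin n) :
    insertFunctor X i ⋙ Pi.eval V i ≅ 𝟭 (V i) :=
  NatIso.ofComponents (fun Y => eqToIso (insertFunctor_obj_self X i Y)) fun φ => by
    change (insertFunctor X i).map φ i ≫ eqToHom (insertFunctor_obj_self X i _) =
      eqToHom (insertFunctor_obj_self X i _) ≫ φ
    simp [insertFunctor_map_self]

def insertFunctorCompEvalOfNe (X : ∀ j, V j) {i j : Fin n} (h : j ≠ i) :
    insertFunctor X i ⋙ Pi.eval V j ≅ (Functor.const (V i)).obj (X j) :=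
  NatIso.ofComponents (fun Y => eqToIso (insertFunctor_obj_of_ne X h Y)) fun φ => by
    change (insertFunctor X i).map φ j ≫ eqToHom (insertFunctor_obj_of_ne X h _) =
      eqToHom (insertFunctor_obj_of_ne X h _) ≫ 𝟙 _
    simp [insertFunctor_map_of_ne X h]

end Paper

namespace CategoryTheory

open Limits

section ProdProjections

variable {J : Type*} [Category J] {C D : Type*} [Category C] [Category D]

def isColimitMapCoconeFst {K : J ⥤ C × D} {c : Cocone K} (hc : IsColimit c) :
    IsColimit ((Prod.fst C D).mapCocone c) :=
  let lift (s : Cocone (K ⋙ Prod.fst C D)) : Cocone K :=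
    { pt := (s.pt, c.pt.2)
      ι := { app := fun j => Prod.mkHom (s.ι.app j) (c.ι.app j).2
             naturality := fun _ _ φ => Prod.hom_ext ((s.w φ).trans (Category.comp_id _).symm)
              ((congrArg (·.2) (c.w φ)).trans (Category.comp_id _).symm) } }
  { desc := fun s => (hc.desc (lift s)).1
    fac := fun s j => congrArg (·.1) (hc.fac (lift s) j)
    uniq := fun s m hm => congrArg (·.1)
      (hc.uniq (lift s) (Prod.mkHom m (𝟙 _)) fun j => Prod.hom_ext (hm j) (Category.comp_id _)) }

instance {K : J ⥤ C × D} : PreservesColimit K (Prod.fst C D) :=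
  ⟨fun hc => ⟨isColimitMapCoconeFst hc⟩⟩

instance {K : J ⥤ C × D} : PreservesColimit K (Prod.snd C D) :=
  inferInstanceAs (PreservesColimit K ((Prod.braiding C D).functor ⋙ Prod.fst D C))

end ProdProjections

section Coequalizers

variable {C D : Type*} [Category C] [Category D] {A B : C} {f g : A ⟶ B}

theorem IsReflexivePair.map (F : C ⥤ D) (hfg : IsReflexivePair f g) :
    IsReflexivePair (F.map f) (F.map g) :=
  let ⟨s, hsf, hsg⟩ := hfg.common_section'
  .mk' (F.map s) (by rw [← F.map_comp, hsf, F.map_id]) (by rw [← F.map_comp, hsg, F.map_id])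

theorem Limits.preservesColimit_parallelPair_of_isColimit_cofork_map (F : C ⥤ D)
    (H : ∀ {Q : C} (π : B ⟶ Q) (w : f ≫ π = g ≫ π), IsColimit (Cofork.ofπ π w) →
      IsColimit (Cofork.ofπ (F.map π) (by rw [← F.map_comp, w, F.map_comp]) :
        Cofork (F.map f) (F.map g))) :
    PreservesColimit (parallelPair f g) F := by
  refine ⟨fun {c} hc => ?_⟩
  have hc' : IsColimit (Cofork.ofπ (Cofork.π c) (Cofork.condition c)) :=
    hc.ofIsoColimit (Cofork.ext (Iso.refl _) (Category.comp_id _))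
  exact (preservesColimit_of_preserves_colimit_cocone hc'
    ((isColimitMapCoconeCoforkEquiv F _).symm (H _ _ hc'))).preserves hc

theorem Limits.preservesColimit_parallelPair_of_eq (F : C ⥤ D) (h : f = g) :
    PreservesColimit (parallelPair f g) F :=
  preservesColimit_parallelPair_of_isColimit_cofork_map F fun π _ hπ => by
    have : IsIso π := isIso_colimit_cocone_parallelPair_of_eq h hπ
    exact (isColimitIdCofork (congrArg F.map h)).ofIsoColimit
      (Cofork.ext (asIso (F.map π)) (Category.id_comp _))

def Limits.Cofork.isColimitOfComp {U X X' Y Z T : C} {u v : U ⟶ Y} {a b : X ⟶ Y}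
    {a' b' : X' ⟶ Z} {p : Y ⟶ Z} {q : Z ⟶ T} {wp : a ≫ p = b ≫ p} {wq : a' ≫ q = b' ≫ q}
    (hp : IsColimit (Cofork.ofπ p wp)) (hq : IsColimit (Cofork.ofπ q wq))
    (h₁ : ∀ {T' : C} (h : Y ⟶ T'), u ≫ h = v ≫ h → a ≫ h = b ≫ h)
    (h₂ : ∀ {T' : C} (k : Z ⟶ T'), u ≫ p ≫ k = v ≫ p ≫ k → a' ≫ k = b' ≫ k)
    {r : Y ⟶ T} (hr : p ≫ q = r) {w : u ≫ r = v ≫ r} : IsColimit (Cofork.ofπ r w) := by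
  subst hr
  refine Cofork.IsColimit.mk' _ fun t => ?_
  obtain ⟨k₁, hk₁ : p ≫ k₁ = t.π⟩ := Cofork.IsColimit.desc' hp t.π (h₁ _ t.condition)
  obtain ⟨k₂, hk₂ : q ≫ k₂ = k₁⟩ :=
    Cofork.IsColimit.desc' hq k₁ (h₂ _ (by rw [hk₁]; exact t.condition))
  refine ⟨k₂, show (p ≫ q) ≫ k₂ = t.π by rw [Category.assoc, hk₂, hk₁], fun {m} hm => ?_⟩
  replace hm : p ≫ q ≫ m = p ≫ q ≫ k₂ := by rw [hk₂, hk₁, ← Category.assoc]; exact hm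
  exact Cofork.IsColimit.hom_ext hq (Cofork.IsColimit.hom_ext hp hm)

end Coequalizers

section FinCons

variable {n : ℕ} (C : Fin (n + 1) → Type*) [∀ i, Category (C i)]

def Pi.finConsFunctor : (C 0 × ∀ j : Fin n, C j.succ) ⥤ ∀ i, C i :=
  Functor.pi' fun i => Fin.cases (motive := fun i => (C 0 × ∀ j : Fin n, C j.succ) ⥤ C i)
    (Prod.fst _ _) (fun j => Prod.snd _ _ ⋙ Pi.eval _ j) i

def Pi.finConsEquivalence : (C 0 × ∀ j : Fin n, C j.succ) ≌ ∀ i, C i :=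
  Equivalence.mk (Pi.finConsFunctor C)
    (Functor.prod' (Pi.eval C 0) (Functor.pi' fun j => Pi.eval C j.succ))
    (Iso.refl _)
    (NatIso.pi' fun i => Fin.cases
      (motive := fun i => (Functor.prod' (Pi.eval C 0) (Functor.pi' fun j => Pi.eval C j.succ) ⋙
        Pi.finConsFunctor C) ⋙ Pi.eval C i ≅ 𝟭 _ ⋙ Pi.eval C i)
      (Iso.refl _) (fun _ => Iso.refl _) i)

end FinCons

end CategoryTheory

namespace Paper

open CategoryTheory.Prod

section Transport

variable {C D W : Type u} [Category.{v} C] [Category.{v} D] [Category.{w} W]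

theorem PreservesReflexiveCoequalizers.of_iso {F G : C ⥤ W} (e : F ≅ G)
    (hF : PreservesReflexiveCoequalizers F) : PreservesReflexiveCoequalizers G :=
  fun f g hfg =>
    have := (hF f g hfg).some
    ⟨preservesColimit_of_natIso _ e⟩

theorem PreservesReflexiveCoequalizers.precomp {G : D ⥤ W} (hG : PreservesReflexiveCoequalizers G)
    (E : C ⥤ D) [PreservesColimitsOfShape WalkingParallelPair E] :
    PreservesReflexiveCoequalizers (E ⋙ G) :=
  fun f g hfg => by
    have := (hG _ _ (hfg.map E)).some
    let i : parallelPair (E.map f) (E.map g) ≅ parallelPair f g ⋙ E :=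
      (diagramIsoParallelPair (parallelPair f g ⋙ E)).symm
    have := preservesColimit_of_iso_diagram G i
    exact ⟨inferInstance⟩

noncomputable def PreservesReflexiveCoequalizers.isColimitCoforkMap {G : C ⥤ W}
    (hG : PreservesReflexiveCoequalizers G) {A B Q : C} {f g : A ⟶ B} (hfg : IsReflexivePair f g)
    {π : B ⟶ Q} {w : f ≫ π = g ≫ π} (hπ : IsColimit (Cofork.ofπ π w)) :
    IsColimit (Cofork.ofπ (G.map π) (by rw [← G.map_comp, w, G.map_comp]) :
      Cofork (G.map f) (G.map g)) :=
  have := (hG f g hfg).some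
  isColimitCoforkMapOfIsColimit G w hπ

end Transport

section TwoVariables

variable {C D W : Type u} [Category.{v} C] [Category.{v} D] [Category.{w} W] (F : C × D ⥤ W)

noncomputable def isColimitCoforkMapSectL {Y : D}
    (hL : PreservesReflexiveCoequalizers (sectL C Y ⋙ F)) {A B Q : C} {f g : A ⟶ B}
    (hfg : IsReflexivePair f g) {π : B ⟶ Q} {w : f ≫ π = g ≫ π}
    (hπ : IsColimit (Cofork.ofπ π w)) :
    IsColimit (Cofork.ofπ (F.map (π ×ₘ 𝟙 Y)) (by simp only [← F.map_comp, prod_comp, w]) :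
      Cofork (F.map (f ×ₘ 𝟙 Y)) (F.map (g ×ₘ 𝟙 Y))) :=
  PreservesReflexiveCoequalizers.isColimitCoforkMap hL hfg hπ

noncomputable def isColimitCoforkMapSectR {X : C}
    (hR : PreservesReflexiveCoequalizers (sectR X D ⋙ F)) {A B Q : D} {f g : A ⟶ B}
    (hfg : IsReflexivePair f g) {π : B ⟶ Q} {w : f ≫ π = g ≫ π}
    (hπ : IsColimit (Cofork.ofπ π w)) :
    IsColimit (Cofork.ofπ (F.map (𝟙 X ×ₘ π)) (by simp only [← F.map_comp, prod_comp, w]) :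
      Cofork (F.map (𝟙 X ×ₘ f)) (F.map (𝟙 X ×ₘ g))) :=
  PreservesReflexiveCoequalizers.isColimitCoforkMap hR hfg hπ

variable (hL : ∀ Y : D, PreservesReflexiveCoequalizers (sectL C Y ⋙ F))
  (hR : ∀ X : C, PreservesReflexiveCoequalizers (sectR X D ⋙ F))

include hL hR in
noncomputable def isColimitCoforkMapProd {A₁ B₁ Q₁ : C} {A₂ B₂ Q₂ : D}
    {f₁ g₁ : A₁ ⟶ B₁} {f₂ g₂ : A₂ ⟶ B₂} (hfg₁ : IsReflexivePair f₁ g₁)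
    (hfg₂ : IsReflexivePair f₂ g₂) {π₁ : B₁ ⟶ Q₁} {π₂ : B₂ ⟶ Q₂} {w₁ : f₁ ≫ π₁ = g₁ ≫ π₁}
    {w₂ : f₂ ≫ π₂ = g₂ ≫ π₂} (hπ₁ : IsColimit (Cofork.ofπ π₁ w₁))
    (hπ₂ : IsColimit (Cofork.ofπ π₂ w₂)) :
    IsColimit (Cofork.ofπ (F.map (π₁ ×ₘ π₂)) (by simp only [← F.map_comp, prod_comp, w₁, w₂]) :
      Cofork (F.map (f₁ ×ₘ f₂)) (F.map (g₁ ×ₘ g₂))) := by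
  have : Epi (F.map (π₁ ×ₘ 𝟙 A₂)) :=
    Cofork.IsColimit.epi (isColimitCoforkMapSectL F (hL A₂) hfg₁ hπ₁)
  refine Cofork.isColimitOfComp (isColimitCoforkMapSectL F (hL B₂) hfg₁ hπ₁)
    (isColimitCoforkMapSectR F (hR Q₁) hfg₂ hπ₂) (fun h hh => ?_) (fun k hk => ?_)
    (by simp only [← F.map_comp, prod_comp, Category.id_comp, Category.comp_id])
  · obtain ⟨s₂, hs₂f, hs₂g⟩ := hfg₂.common_section'
    have hf : F.map (f₁ ×ₘ 𝟙 B₂) = F.map (𝟙 A₁ ×ₘ s₂) ≫ F.map (f₁ ×ₘ f₂) := by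
      simp only [← F.map_comp, prod_comp, Category.id_comp, hs₂f]
    have hg : F.map (g₁ ×ₘ 𝟙 B₂) = F.map (𝟙 A₁ ×ₘ s₂) ≫ F.map (g₁ ×ₘ g₂) := by
      simp only [← F.map_comp, prod_comp, Category.id_comp, hs₂g]
    rw [hf, hg, Category.assoc, Category.assoc, hh]
  · obtain ⟨s₁, hs₁f, hs₁g⟩ := hfg₁.common_section'
    have hf : F.map (π₁ ×ₘ 𝟙 A₂) ≫ F.map (𝟙 Q₁ ×ₘ f₂) =
        F.map (s₁ ×ₘ 𝟙 A₂) ≫ F.map (f₁ ×ₘ f₂) ≫ F.map (π₁ ×ₘ 𝟙 B₂) := by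
      simp only [← F.map_comp, prod_comp, Category.id_comp, Category.comp_id, reassoc_of% hs₁f]
    have hg : F.map (π₁ ×ₘ 𝟙 A₂) ≫ F.map (𝟙 Q₁ ×ₘ g₂) =
        F.map (s₁ ×ₘ 𝟙 A₂) ≫ F.map (g₁ ×ₘ g₂) ≫ F.map (π₁ ×ₘ 𝟙 B₂) := by
      simp only [← F.map_comp, prod_comp, Category.id_comp, Category.comp_id, reassoc_of% hs₁g]
    rw [← cancel_epi (F.map (π₁ ×ₘ 𝟙 A₂)), reassoc_of% hf, reassoc_of% hg, hk]

include hL hR in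
theorem preservesReflexiveCoequalizers_of_sectL_sectR : PreservesReflexiveCoequalizers F :=
  fun _ _ hfg => ⟨preservesColimit_parallelPair_of_isColimit_cofork_map F fun _ w hπ =>
    isColimitCoforkMapProd F hL hR (hfg.map (fst C D))
      (hfg.map (snd C D))
      (isColimitCoforkMapOfIsColimit (fst C D) w hπ)
      (isColimitCoforkMapOfIsColimit (snd C D) w hπ)⟩

end TwoVariables

section FinCons

variable {n : ℕ} {V : Fin (n + 1) → Type u} [∀ i, Category.{v} (V i)]

def sectLCompFinConsIso (x : V 0) (Y : ∀ j : Fin n, V j.succ) :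
    sectL (V 0) Y ⋙ Pi.finConsFunctor V ≅
      insertFunctor ((Pi.finConsFunctor V).obj (x, Y)) 0 := by
  refine NatIso.pi' fun k => ?_
  induction k using Fin.cases with
  | zero => exact (insertFunctorCompEvalSelf _ 0).symm
  | succ j => exact (insertFunctorCompEvalOfNe ((Pi.finConsFunctor V).obj (x, Y))
      (Fin.succ_ne_zero j)).symm

def insertFunctorCompSectRCompFinConsIso (x : V 0) (Y : ∀ j : Fin n, V j.succ) (i : Fin n) :
    insertFunctor Y i ⋙ sectR x _ ⋙ Pi.finConsFunctor V ≅
      insertFunctor ((Pi.finConsFunctor V).obj (x, Y)) i.succ := by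
  refine NatIso.pi' fun k => ?_
  induction k using Fin.cases with
  | zero => exact (insertFunctorCompEvalOfNe ((Pi.finConsFunctor V).obj (x, Y))
      (Fin.succ_ne_zero i).symm).symm
  | succ j =>
    by_cases h : j = i
    · subst h
      exact insertFunctorCompEvalSelf Y j ≪≫
        (insertFunctorCompEvalSelf ((Pi.finConsFunctor V).obj (x, Y)) j.succ).symm
    · exact insertFunctorCompEvalOfNe Y h ≪≫
        (insertFunctorCompEvalOfNe ((Pi.finConsFunctor V).obj (x, Y))
          ((Fin.succ_injective _).ne h)).symm

end FinCons

variable {n : ℕ} {V : Fin n → Type u} [∀ i, Category.{v} (V i)]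

/-- If a functor `F : V₁ × ⋯ × Vₙ ⥤ W` preserves reflexive coequalisers in
each variable separately, then it preserves reflexive coequalisers. -/
theorem stmt15 {W : Type u} [Category.{v} W] (F : (∀ j, V j) ⥤ W)
    (h : ∀ (i : Fin n) (X : ∀ j, V j),
      PreservesReflexiveCoequalizers (insertFunctor X i ⋙ F)) :
    PreservesReflexiveCoequalizers F := by
  induction n with
  | zero => exact fun f g _ => ⟨preservesColimit_parallelPair_of_eq F (funext fun i => i.elim0)⟩
  | succ n ih =>
    have hG : PreservesReflexiveCoequalizers (Pi.finConsFunctor V ⋙ F) :=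
      preservesReflexiveCoequalizers_of_sectL_sectR (Pi.finConsFunctor V ⋙ F)
        (fun Y {A} _ => PreservesReflexiveCoequalizers.of_iso
          (Functor.isoWhiskerRight (sectLCompFinConsIso A Y) F).symm (h 0 _))
        (fun x => ih _ fun i Y => PreservesReflexiveCoequalizers.of_iso
          (Functor.isoWhiskerRight (insertFunctorCompSectRCompFinConsIso x Y i) F).symm
          (h i.succ _))
    let e := Pi.finConsEquivalence V
    intro A B f g hfg
    exact PreservesReflexiveCoequalizers.of_iso
      (Functor.isoWhiskerRight e.counitIso F ≪≫ F.leftUnitor)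
      (PreservesReflexiveCoequalizers.precomp hG e.inverse) f g hfg
end Paper
end

section
/- (3×3 lemma for reflexive coequalisers) Given a diagram with rows A ⇉ B → C and D ⇉ E → F and vertical pairs A ⇉ D, B ⇉ E, C ⇉ F, and a map c : F → H, such that: the two top rows and the rightmost column are coequalisers, a₁ and b₁ : A → D have a common section, f₁ and g₁ : A → B have a common section, and the evident serial commutativities hold (f₂a₁ = a₂f₁, g₂b₁ = b₂g₁, h₂a₂ = a₃h₁, h₂b₂ = b₃h₁); then c∘h₂ : E → H is a coequaliser of f₂∘a₁ and g₂∘b₁. -/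
/-!
A cofork `k : E ⟶ W` under `a₁ ≫ f₂, b₁ ≫ g₂` also coequalises `f₂, g₂` (precompose with the common
section of `a₁, b₁`) and `a₂, b₂` (precompose with the common section of `f₁, g₁` and use the
serial commutativities). So `k` descends along `h₂` to `m : F ⟶ W`; since `h₁` is epi, `m`
coequalises `a₃, b₃` and hence descends along `c`. Uniqueness holds because `h₂ ≫ c` is epi.
-/

open CategoryTheory CategoryTheory.Limits

universe v u

namespace Paper

section

variable {V : Type u} [Category.{v} V]

theorem eq_of_comp_eq_of_common_section {X Y Z : V} {a b : X ⟶ Y} {s : Y ⟶ X}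
    (ha : s ≫ a = 𝟙 Y) (hb : s ≫ b = 𝟙 Y) {x y : Y ⟶ Z} (h : a ≫ x = b ≫ y) : x = y := by
  simpa only [reassoc_of% ha, reassoc_of% hb] using s ≫= h

def descOfCoequalizes {A B C D E F H W : V}
    {f₁ g₁ : A ⟶ B} {h₁ : B ⟶ C} {f₂ g₂ : D ⟶ E} {h₂ : E ⟶ F}
    {a₂ b₂ : B ⟶ E} {a₃ b₃ : C ⟶ F} {c : F ⟶ H}
    {w₁ : f₁ ≫ h₁ = g₁ ≫ h₁} (t₁ : IsColimit (Cofork.ofπ h₁ w₁))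
    {w₂ : f₂ ≫ h₂ = g₂ ≫ h₂} (t₂ : IsColimit (Cofork.ofπ h₂ w₂))
    {w₃ : a₃ ≫ c = b₃ ≫ c} (t₃ : IsColimit (Cofork.ofπ c w₃))
    (c₃ : a₂ ≫ h₂ = h₁ ≫ a₃) (c₄ : b₂ ≫ h₂ = h₁ ≫ b₃)
    (k : E ⟶ W) (hfg : f₂ ≫ k = g₂ ≫ k) (hab : a₂ ≫ k = b₂ ≫ k) :
    { l : H ⟶ W // h₂ ≫ c ≫ l = k } :=
  let m := Cofork.IsColimit.desc' t₂ k hfg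
  have hab₃ : a₃ ≫ m.1 = b₃ ≫ m.1 := by
    refine Cofork.IsColimit.hom_ext t₁ ?_
    have hm : h₂ ≫ m.1 = k := m.2
    simp only [Cofork.π_ofπ, ← reassoc_of% c₃, ← reassoc_of% c₄, hm, hab]
  let l := Cofork.IsColimit.desc' t₃ m.1 hab₃
  ⟨l.1, by rw [show c ≫ l.1 = m.1 from l.2]; exact m.2⟩

end

/-- 3×3 lemma for reflexive coequalisers. -/
theorem stmt16 {V : Type u} [Category.{v} V] {A B C D E F H : V}
    (f₁ g₁ : A ⟶ B) (h₁ : B ⟶ C) (f₂ g₂ : D ⟶ E) (h₂ : E ⟶ F)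
    (a₁ b₁ : A ⟶ D) (a₂ b₂ : B ⟶ E) (a₃ b₃ : C ⟶ F) (c : F ⟶ H)
    -- the two top rows are coequalisers:
    (w₁ : f₁ ≫ h₁ = g₁ ≫ h₁) (t₁ : IsColimit (Cofork.ofπ h₁ w₁))
    (w₂ : f₂ ≫ h₂ = g₂ ≫ h₂) (t₂ : IsColimit (Cofork.ofπ h₂ w₂))
    -- the right-most column is a coequaliser:
    (w₃ : a₃ ≫ c = b₃ ≫ c) (t₃ : IsColimit (Cofork.ofπ c w₃))
    -- `a₁` and `b₁` have a common section:
    (s : D ⟶ A) (hs₁ : s ≫ a₁ = 𝟙 D) (hs₂ : s ≫ b₁ = 𝟙 D)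
    -- `f₁` and `g₁` have a common section:
    (r : B ⟶ A) (hr₁ : r ≫ f₁ = 𝟙 B) (hr₂ : r ≫ g₁ = 𝟙 B)
    -- serial commutativities:
    (c₁ : a₁ ≫ f₂ = f₁ ≫ a₂) (c₂ : b₁ ≫ g₂ = g₁ ≫ b₂)
    (c₃ : a₂ ≫ h₂ = h₁ ≫ a₃) (c₄ : b₂ ≫ h₂ = h₁ ≫ b₃) :
    Nonempty (IsColimit (Cofork.ofπ (h₂ ≫ c)
      (show (a₁ ≫ f₂) ≫ h₂ ≫ c = (b₁ ≫ g₂) ≫ h₂ ≫ c by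
        rw [Category.assoc, Category.assoc, reassoc_of% c₁, reassoc_of% c₂,
          reassoc_of% c₃, reassoc_of% c₄, ← reassoc_of% w₁, w₃]))) := by
  have : Epi (h₂ ≫ c) := epi_comp' (Cofork.IsColimit.epi t₂) (Cofork.IsColimit.epi t₃)
  refine ⟨Cofork.IsColimit.mk' _ fun k => ?_⟩
  have cond : a₁ ≫ f₂ ≫ k.π = b₁ ≫ g₂ ≫ k.π := by simpa using k.condition
  have hfg : f₂ ≫ k.π = g₂ ≫ k.π := eq_of_comp_eq_of_common_section hs₁ hs₂ cond
  have hab : a₂ ≫ k.π = b₂ ≫ k.π := eq_of_comp_eq_of_common_section hr₁ hr₂ <| by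
    rw [← reassoc_of% c₁, ← reassoc_of% c₂, cond]
  obtain ⟨l, hl⟩ := descOfCoequalizes t₁ t₂ t₃ c₃ c₄ k.π hfg hab
  refine ⟨l, by simpa using hl, fun {n} hn => ?_⟩
  rw [← cancel_epi (h₂ ≫ c), Category.assoc, Category.assoc, hl]
  simpa using hn

end Paper
end

section
/- Let V be a category with filtered colimits and coequalisers, T a λ-accessible monad on V for some regular cardinal λ, and f, g : (A,a) ⇉ (B,b) a pair of T-algebra morphisms. Then the transfinitely constructed map q_{<n} : B → Q_n is the coequaliser of f and g in the category of T-algebras, for any ordinal n with |n| ≥ λ. -/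
/-!
Every `v m` is an epimorphism (`v 0` is `q 0` after the split epimorphism `b`, and for `m > 0`
`v m` coequalises all the pairs below it), so by transfinite induction a map `h : B ⟶ Z` into
an algebra `(Z, z)` that coequalises `f` and `g` extends uniquely to maps `Q m ⟶ Z` turning
each `v m` into `z` (`IsDesc`). At `o = κ.ord` the sequence below `o` is `κ`-filtered, so its
colimit `Q o` is preserved by `T` and by `T ∘ T`, and the `v m` glue to an algebra structure on
`Q o`. Extending `q_{0,o}` into this algebra gives maps `Q n ⟶ Q o` inverse to `q_{o,n}` for
all `n ≥ o`. Once `q n` and `q (n + 1)` are invertible, `v n ≫ (q n)⁻¹` is an algebra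
structure, and the extension property is exactly the universal property of the coequaliser of
`f` and `g` among algebras.
-/

open CategoryTheory CategoryTheory.Limits

universe w v u

namespace Paper

/-- A category `J` is `κ`-filtered when every diagram in `J` of size `< κ` admits a cocone. -/
def IsCardFiltered (κ : Cardinal.{w}) (J : Type u) [Category.{v} J] : Prop :=
  ∀ (K : Type w) (_ : SmallCategory K) (F : K ⥤ J),
    Cardinal.mk (Σ (a : K) (b : K), a ⟶ b) < κ → Nonempty (Limits.Cocone F)

/-- A functor preserves `κ`-filtered colimits when it preserves colimits of every small
`κ`-filtered shape. -/
def PreservesCardFilteredColimits {V : Type u} [Category.{v} V] (κ : Cardinal.{v})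
    {D : Type w} [Category.{v} D] (F : V ⥤ D) : Prop :=
  ∀ (J : Type v) (_ : SmallCategory J), IsCardFiltered.{v} κ J →
    Nonempty (PreservesColimitsOfShape J F)

open Order

theorem Monad.map_comp_eq_of_mu {V : Type u} [Category.{v} V] {T : Monad V} {A B C Y : V}
    {t : T.obj A ⟶ B} {p : A ⟶ C} {r : B ⟶ C} {x : T.obj C ⟶ Y}
    (hx : (T.μ.app A ≫ T.map p) ≫ x = (T.map t ≫ T.map r) ≫ x) :
    T.map p ≫ x = t ≫ r ≫ T.η.app C ≫ x := by
  calc T.map p ≫ x = T.η.app (T.obj A) ≫ (T.μ.app A ≫ T.map p) ≫ x := by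
        rw [← Category.assoc, ← Category.assoc, Monad.left_unit, Category.id_comp]
    _ = t ≫ r ≫ T.η.app C ≫ x := by
        rw [hx, Category.assoc, ← T.unit_naturality_assoc _ t, ← T.unit_naturality_assoc _ r]

theorem isCardFiltered_of_isCardinalFiltered (κ : Cardinal.{w}) [Fact κ.IsRegular]
    (J : Type u) [Category.{v} J] [IsCardinalFiltered J κ] : IsCardFiltered κ J :=
  fun _ _ F hF => IsCardinalFiltered.nonempty_cocone F <| by
    rwa [hasCardinalLT_iff_cardinal_mk_lt, Cardinal.mk_congr (Arrow.equivSigma _)]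

theorem preservesColimitsOfShape_lt_ord {V : Type u} [Category.{v} V] {D : Type w}
    [Category.{v} D] {κ : Cardinal.{v}} (hκ : κ.IsRegular) {F : V ⥤ D}
    (hF : PreservesCardFilteredColimits κ F) :
    PreservesColimitsOfShape {m : Ordinal.{v} // m < κ.ord} F := by
  have : Fact κ.IsRegular := ⟨hκ⟩
  obtain ⟨h⟩ := hF _ _ (isCardFiltered_of_isCardinalFiltered κ κ.ord.ToType)
  exact preservesColimitsOfShape_of_equiv
    (Ordinal.ToType.mk.symm : κ.ord.ToType ≃o {m // m < κ.ord}).equivalence F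

/-- The transfinite sequence away from its base step; `q m m' _ : Q m ⟶ Q m'` is the composite
of the paper's maps `q k` for `m ≤ k < m'`. -/
structure CoequalizerSequence {V : Type u} [Category.{v} V] (T : Monad V) where
  Q : Ordinal.{v} → V
  q : ∀ m m' : Ordinal.{v}, m ≤ m' → (Q m ⟶ Q m')
  v : ∀ m : Ordinal.{v}, T.obj (Q m) ⟶ Q (succ m)
  q_refl : ∀ m, q m m le_rfl = 𝟙 (Q m)
  q_trans : ∀ m₁ m₂ m₃ (h12 : m₁ ≤ m₂) (h23 : m₂ ≤ m₃),
    q m₁ m₂ h12 ≫ q m₂ m₃ h23 = q m₁ m₃ (h12.trans h23)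
  q_succ : ∀ m, q m (succ m) (le_succ m) = T.η.app (Q m) ≫ v m
  v_succ_isCoequalizer : ∀ m : Ordinal.{v},
    ∃ w : (T.μ.app (Q m) ≫ T.map (q m (succ m) (le_succ m))) ≫ v (succ m) =
        T.map (v m) ≫ v (succ m),
      Nonempty (IsColimit (Cofork.ofπ (v (succ m)) w))
  q_isColimit_of_isSuccLimit : ∀ n : Ordinal.{v}, IsSuccLimit n →
    ∀ (Z : V) (w : ∀ m, m < n → (Q m ⟶ Z)),
      (∀ m m' (h : m ≤ m') (hm' : m' < n), q m m' h ≫ w m' hm' = w m (lt_of_le_of_lt h hm')) →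
      ∃! u : Q n ⟶ Z, ∀ m (hm : m < n), q m n hm.le ≫ u = w m hm
  v_condition_of_isSuccLimit : ∀ n (hn : IsSuccLimit n) (m) (hm : m < n),
    (T.μ.app (Q m) ≫ T.map (q m n hm.le)) ≫ v n =
      (T.map (v m) ≫ T.map (q (succ m) n (hn.succ_lt hm).le)) ≫ v n
  v_desc_of_isSuccLimit : ∀ n (hn : IsSuccLimit n) (Z : V) (w : T.obj (Q n) ⟶ Z),
    (∀ m (hm : m < n),
      (T.μ.app (Q m) ≫ T.map (q m n hm.le)) ≫ w =
        (T.map (v m) ≫ T.map (q (succ m) n (hn.succ_lt hm).le)) ≫ w) →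
    ∃! u : Q (succ n) ⟶ Z, v n ≫ u = w

namespace CoequalizerSequence

variable {V : Type u} [Category.{v} V] {T : Monad V} (S : CoequalizerSequence T)

theorem q_comp_q {m₁ m₂ m₃ : Ordinal.{v}} (h12 : m₁ ≤ m₂) (h23 : m₂ ≤ m₃) :
    S.q m₁ m₂ h12 ≫ S.q m₂ m₃ h23 = S.q m₁ m₃ (h12.trans h23) :=
  S.q_trans _ _ _ h12 h23

theorem q_comp_q_assoc {m₁ m₂ m₃ : Ordinal.{v}} (h12 : m₁ ≤ m₂) (h23 : m₂ ≤ m₃) {Z : V}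
    (x : S.Q m₃ ⟶ Z) : S.q m₁ m₂ h12 ≫ S.q m₂ m₃ h23 ≫ x = S.q m₁ m₃ (h12.trans h23) ≫ x := by
  rw [← Category.assoc, S.q_comp_q]

theorem map_q_comp_v {m m' : Ordinal.{v}} (h : m ≤ m') :
    T.map (S.q m m' h) ≫ S.v m' = S.v m ≫ S.q (succ m) (succ m') (succ_le_succ h) := by
  induction m' using SuccOrder.limitRecOn generalizing m with
  | isMin k hk =>
    obtain rfl := hk.eq_of_le h
    simp [S.q_refl]
  | succ k _ ih =>
    rcases h.lt_or_eq with hlt | rfl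
    · have hmk : m ≤ k := lt_succ_iff.mp hlt
      have hk : T.map (S.q k (succ k) (le_succ k)) ≫ S.v (succ k) =
          S.v k ≫ S.q (succ k) (succ (succ k)) (le_succ _) := by
        obtain ⟨hw, -⟩ := S.v_succ_isCoequalizer k
        rw [Monad.map_comp_eq_of_mu (r := 𝟙 _) (by simpa using hw), Category.id_comp, S.q_succ]
      rw [← S.q_comp_q hmk (le_succ k), Functor.map_comp, Category.assoc, hk,
        reassoc_of% (ih hmk), S.q_comp_q]
    · simp [S.q_refl]
  | isSuccLimit k hk _ =>
    rcases h.lt_or_eq with hlt | rfl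
    · rw [Monad.map_comp_eq_of_mu (S.v_condition_of_isSuccLimit k hk m hlt), ← S.q_succ,
        S.q_comp_q]
    · simp [S.q_refl]

theorem map_q_comp_v_assoc {m m' : Ordinal.{v}} (h : m ≤ m') {Z : V}
    (x : S.Q (succ m') ⟶ Z) :
    T.map (S.q m m' h) ≫ S.v m' ≫ x = S.v m ≫ S.q (succ m) (succ m') (succ_le_succ h) ≫ x := by
  rw [← Category.assoc, S.map_q_comp_v, Category.assoc]

def Coequalizes {Z : V} (k : Ordinal.{v}) (w : T.obj (S.Q k) ⟶ Z) : Prop :=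
  ∀ j (hj : j < k), (T.μ.app (S.Q j) ≫ T.map (S.q j k hj.le)) ≫ w =
    (T.map (S.v j) ≫ T.map (S.q (succ j) k (succ_le_of_lt hj))) ≫ w

theorem coequalizes_v (k : Ordinal.{v}) : S.Coequalizes k (S.v k) := by
  intro j hj
  obtain ⟨hw, -⟩ := S.v_succ_isCoequalizer j
  calc (T.μ.app (S.Q j) ≫ T.map (S.q j k hj.le)) ≫ S.v k
      = T.μ.app (S.Q j) ≫ (T.map (S.q j (succ j) (le_succ j)) ≫ S.v (succ j)) ≫
          S.q (succ (succ j)) (succ k) (succ_le_succ (succ_le_of_lt hj)) := by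
        rw [Category.assoc, S.map_q_comp_v, S.map_q_comp_v, Category.assoc, S.q_comp_q]
    _ = (T.map (S.v j) ≫ T.map (S.q (succ j) k (succ_le_of_lt hj))) ≫ S.v k := by
        rw [← Category.assoc, ← Category.assoc, hw, Category.assoc, Category.assoc,
          S.map_q_comp_v]

variable {S} in
theorem Coequalizes.comp {Z Z' : V} {k : Ordinal.{v}} {w : T.obj (S.Q k) ⟶ Z}
    (hw : S.Coequalizes k w) (x : Z ⟶ Z') : S.Coequalizes k (w ≫ x) := fun j hj => by
  simp only [← Category.assoc] at hw ⊢
  rw [hw j hj]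

theorem exists_unique_v_comp {Z : V} {k : Ordinal.{v}} (hk : 0 < k) {w : T.obj (S.Q k) ⟶ Z}
    (hw : S.Coequalizes k w) : ∃! u : S.Q (succ k) ⟶ Z, S.v k ≫ u = w := by
  rcases Ordinal.zero_or_succ_or_isSuccLimit k with rfl | ⟨j, rfl⟩ | hl
  · exact absurd hk (lt_irrefl 0)
  · obtain ⟨_, ⟨hcol⟩⟩ := S.v_succ_isCoequalizer j
    have hwj := hw j (lt_succ j)
    rw [S.q_refl, CategoryTheory.Functor.map_id, Category.comp_id] at hwj
    obtain ⟨u, hu⟩ := Cofork.IsColimit.desc' hcol w hwj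
    exact ⟨u, hu, fun y hy => Cofork.IsColimit.hom_ext hcol (hy.trans hu.symm)⟩
  · exact S.v_desc_of_isSuccLimit k hl Z w hw

theorem epi_v_of_pos {k : Ordinal.{v}} (hk : 0 < k) : Epi (S.v k) :=
  ⟨fun x _ hxy => (S.exists_unique_v_comp hk ((S.coequalizes_v k).comp x)).unique rfl hxy.symm⟩

theorem epi_v {b : T.obj (S.Q 0) ⟶ S.Q 0} (hb : T.η.app (S.Q 0) ≫ b = 𝟙 (S.Q 0))
    (hv0 : S.v 0 = b ≫ S.q 0 (succ 0) (le_succ 0)) [Epi (S.q 0 (succ 0) (le_succ 0))]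
    (m : Ordinal.{v}) : Epi (S.v m) := by
  rcases (zero_le : 0 ≤ m).eq_or_lt with rfl | hm
  · have : IsSplitEpi b := IsSplitEpi.mk' ⟨_, hb⟩
    rw [hv0]
    exact epi_comp _ _
  · exact S.epi_v_of_pos hm

def IsCompatible (n : Ordinal.{v}) (a : T.obj (S.Q n) ⟶ S.Q n) : Prop :=
  ∀ m (hm : m < n), T.map (S.q m n hm.le) ≫ a = S.v m ≫ S.q (succ m) n (succ_le_of_lt hm)

def diagram (o : Ordinal.{v}) : {m : Ordinal.{v} // m < o} ⥤ V where
  obj m := S.Q m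
  map φ := S.q _ _ (leOfHom φ)
  map_id m := S.q_refl m
  map_comp _ _ := (S.q_trans _ _ _ _ _).symm

def cocone (o : Ordinal.{v}) : Cocone (S.diagram o) where
  pt := S.Q o
  ι :=
    { app m := S.q m o m.2.le
      naturality _ _ _ := by dsimp [diagram]; rw [Category.comp_id, S.q_comp_q] }

noncomputable def isColimitCocone {o : Ordinal.{v}} (ho : IsSuccLimit o) :
    IsColimit (S.cocone o) :=
  have H (s : Cocone (S.diagram o)) := S.q_isColimit_of_isSuccLimit o ho s.pt
    (fun m hm => s.ι.app ⟨m, hm⟩)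
    (fun m _ h hm' =>
      s.w (homOfLE h : (⟨m, h.trans_lt hm'⟩ : {m : Ordinal.{v} // m < o}) ⟶ ⟨_, hm'⟩))
  { desc s := (H s).exists.choose
    fac s m := (H s).exists.choose_spec m m.2
    uniq s _ hu := (H s).unique (fun m hm => hu ⟨m, hm⟩) (H s).exists.choose_spec }

theorem hom_ext_of_isSuccLimit {o : Ordinal.{v}} (ho : IsSuccLimit o) {Z : V}
    {x y : S.Q o ⟶ Z} (h : ∀ m (hm : m < o), S.q m o hm.le ≫ x = S.q m o hm.le ≫ y) : x = y :=
  (S.isColimitCocone ho).hom_ext fun m => h m m.2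

def vCocone (o : Ordinal.{v}) : Cocone (S.diagram o ⋙ (T : V ⥤ V)) where
  pt := S.Q o
  ι :=
    { app m := S.v m ≫ S.q (succ m) o (succ_le_of_lt m.2)
      naturality _ _ φ := by
        dsimp [diagram]
        rw [Category.comp_id, S.map_q_comp_v_assoc (leOfHom φ), S.q_comp_q] }

section LimitAction

variable {o : Ordinal.{v}} (ho : IsSuccLimit o)
  [PreservesColimitsOfShape {m : Ordinal.{v} // m < o} (T : V ⥤ V)]

noncomputable def limitAction : T.obj (S.Q o) ⟶ S.Q o :=
  (isColimitOfPreserves (T : V ⥤ V) (S.isColimitCocone ho)).desc (S.vCocone o)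

theorem isCompatible_limitAction : S.IsCompatible o (S.limitAction ho) := fun m hm =>
  (isColimitOfPreserves (T : V ⥤ V) (S.isColimitCocone ho)).fac (S.vCocone o) ⟨m, hm⟩

include ho in
theorem map_hom_ext {Z : V} {x y : T.obj (S.Q o) ⟶ Z}
    (h : ∀ m (hm : m < o), T.map (S.q m o hm.le) ≫ x = T.map (S.q m o hm.le) ≫ y) : x = y :=
  (isColimitOfPreserves (T : V ⥤ V) (S.isColimitCocone ho)).hom_ext fun m => h m m.2

include ho in
theorem map_map_hom_ext {Z : V} {x y : T.obj (T.obj (S.Q o)) ⟶ Z}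
    (h : ∀ m (hm : m < o), T.map (T.map (S.q m o hm.le)) ≫ x =
      T.map (T.map (S.q m o hm.le)) ≫ y) : x = y :=
  (isColimitOfPreserves (T : V ⥤ V) (isColimitOfPreserves (T : V ⥤ V)
    (S.isColimitCocone ho))).hom_ext fun m => h m m.2

theorem unit_limitAction : T.η.app (S.Q o) ≫ S.limitAction ho = 𝟙 (S.Q o) :=
  S.hom_ext_of_isSuccLimit ho fun m hm => by
    rw [T.unit_naturality_assoc _ _, S.isCompatible_limitAction ho m hm,
      ← Category.assoc, ← S.q_succ, S.q_comp_q, Category.comp_id]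

theorem assoc_limitAction :
    T.μ.app (S.Q o) ≫ S.limitAction ho = T.map (S.limitAction ho) ≫ S.limitAction ho :=
  S.map_map_hom_ext ho fun m hm => by
    have hm' : succ m < o := ho.succ_lt hm
    obtain ⟨hw, -⟩ := S.v_succ_isCoequalizer m
    calc T.map (T.map (S.q m o hm.le)) ≫ T.μ.app (S.Q o) ≫ S.limitAction ho
        = (T.μ.app (S.Q m) ≫ T.map (S.q m (succ m) (le_succ m))) ≫ S.v (succ m) ≫
            S.q (succ (succ m)) o (succ_le_of_lt hm') := by
          rw [T.mu_naturality_assoc _ _, S.isCompatible_limitAction ho m hm,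
            ← S.q_comp_q (le_succ (succ m)) (succ_le_of_lt hm'), ← S.map_q_comp_v_assoc,
            Category.assoc]
      _ = T.map (T.map (S.q m o hm.le)) ≫ T.map (S.limitAction ho) ≫ S.limitAction ho := by
          rw [Category.assoc, reassoc_of% hw, ← T.map_comp_assoc,
            S.isCompatible_limitAction ho m hm, T.map_comp_assoc,
            S.isCompatible_limitAction ho _ hm']

theorem limitAction_comp_q_succ :
    S.limitAction ho ≫ S.q o (succ o) (le_succ o) = S.v o :=
  S.map_hom_ext ho fun m hm => by
    rw [reassoc_of% S.isCompatible_limitAction ho m hm, S.q_comp_q, S.map_q_comp_v]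

end LimitAction

def IsDesc {Z : V} (z : T.obj Z ⟶ Z) (h : S.Q 0 ⟶ Z) (n : Ordinal.{v}) (u : S.Q n ⟶ Z) :
    Prop :=
  S.q 0 n zero_le ≫ u = h ∧ ∀ m (hm : m < n),
    S.v m ≫ S.q (succ m) n (succ_le_of_lt hm) ≫ u = T.map (S.q m n hm.le ≫ u) ≫ z

section IsDesc

variable {S} {Z : V} {z : T.obj Z ⟶ Z} {h : S.Q 0 ⟶ Z}

theorem IsDesc.restrict {n : Ordinal.{v}} {u : S.Q n ⟶ Z} (hu : S.IsDesc z h n u)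
    {j : Ordinal.{v}} (hj : j ≤ n) : S.IsDesc z h j (S.q j n hj ≫ u) :=
  ⟨by rw [S.q_comp_q_assoc, hu.1], fun m hm => by
    rw [S.q_comp_q_assoc, S.q_comp_q_assoc, hu.2 m (hm.trans_le hj)]⟩

theorem IsDesc.unique (hv : ∀ m, Epi (S.v m)) {n : Ordinal.{v}} {u u' : S.Q n ⟶ Z}
    (hu : S.IsDesc z h n u) (hu' : S.IsDesc z h n u') : u = u' := by
  induction n using SuccOrder.limitRecOn with
  | isMin n hn =>
    obtain rfl : n = 0 := hn.eq_bot
    have h1 := hu.1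
    have h2 := hu'.1
    rw [S.q_refl, Category.id_comp] at h1 h2
    rw [h1, h2]
  | succ k _ ih =>
    have hk := ih (hu.restrict (le_succ k)) (hu'.restrict (le_succ k))
    have h1 := hu.2 k (lt_succ k)
    have h2 := hu'.2 k (lt_succ k)
    rw [S.q_refl, Category.id_comp] at h1 h2
    exact (cancel_epi (S.v k)).1 (by rw [h1, h2, hk])
  | isSuccLimit n hn ih =>
    exact S.hom_ext_of_isSuccLimit hn fun m hm =>
      ih m hm (hu.restrict hm.le) (hu'.restrict hm.le)

theorem IsDesc.coequalizes (hz : T.μ.app Z ≫ z = T.map z ≫ z) {n : Ordinal.{v}}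
    {u : S.Q n ⟶ Z} (hu : S.IsDesc z h n u) : S.Coequalizes n (T.map u ≫ z) := fun j hj => by
  calc (T.μ.app (S.Q j) ≫ T.map (S.q j n hj.le)) ≫ T.map u ≫ z
      = T.map (T.map (S.q j n hj.le ≫ u) ≫ z) ≫ z := by
        rw [Category.assoc, ← T.map_comp_assoc, ← T.mu_naturality_assoc _ _, hz,
          T.map_comp_assoc]
    _ = (T.map (S.v j) ≫ T.map (S.q (succ j) n (succ_le_of_lt hj))) ≫ T.map u ≫ z := by
        rw [← hu.2 j hj]
        simp only [T.map_comp, Category.assoc]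

theorem isDesc_succ (hz : T.η.app Z ≫ z = 𝟙 Z) {k : Ordinal.{v}} {u : S.Q k ⟶ Z}
    (hu : S.IsDesc z h k u) {u' : S.Q (succ k) ⟶ Z} (hu' : S.v k ≫ u' = T.map u ≫ z) :
    S.IsDesc z h (succ k) u' := by
  have hq : S.q k (succ k) (le_succ k) ≫ u' = u := by
    rw [S.q_succ, Category.assoc, hu', ← T.unit_naturality_assoc _ _, hz, Category.comp_id]
  refine ⟨by rw [← S.q_comp_q_assoc zero_le (le_succ k), hq, hu.1], fun m hm => ?_⟩
  rcases (lt_succ_iff.mp hm).lt_or_eq with hmk | rfl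
  · rw [← S.q_comp_q_assoc (succ_le_of_lt hmk) (le_succ k), hq, hu.2 m hmk,
      ← S.q_comp_q_assoc hmk.le (le_succ k), hq]
  · rw [S.q_refl, Category.id_comp, hq, hu']

theorem isDesc_of_isSuccLimit {n : Ordinal.{v}} (hn : IsSuccLimit n) {u : S.Q n ⟶ Z}
    (hu : ∀ m (hm : m < n), S.IsDesc z h m (S.q m n hm.le ≫ u)) : S.IsDesc z h n u := by
  refine ⟨by simpa [S.q_refl] using (hu 0 hn.bot_lt).1, fun m hm => ?_⟩
  have h1 := (hu (succ m) (hn.succ_lt hm)).2 m (lt_succ m)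
  rwa [S.q_refl, Category.id_comp, S.q_comp_q_assoc] at h1

theorem isDesc_of_comm {n : Ordinal.{v}} {a : T.obj (S.Q n) ⟶ S.Q n} (ha : S.IsCompatible n a)
    {s : S.Q n ⟶ Z} (hs : T.map s ≫ z = a ≫ s) (h0 : S.q 0 n zero_le ≫ s = h) :
    S.IsDesc z h n s :=
  ⟨h0, fun m hm => by rw [T.map_comp, Category.assoc, hs, reassoc_of% ha m hm]⟩

theorem IsDesc.comm (hv : ∀ m, Epi (S.v m)) {n : Ordinal.{v}}
    [IsIso (S.q n (succ n) (le_succ n))] {u : S.Q n ⟶ Z} (hu : S.IsDesc z h n u)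
    {u' : S.Q (succ n) ⟶ Z} (hu' : S.IsDesc z h (succ n) u') :
    T.map u ≫ z = (S.v n ≫ inv (S.q n (succ n) (le_succ n))) ≫ u := by
  have hq : S.q n (succ n) (le_succ n) ≫ u' = u := (hu'.restrict (le_succ n)).unique hv hu
  have h1 := hu'.2 n (lt_succ n)
  rw [S.q_refl, Category.id_comp, hq] at h1
  rw [← h1, Category.assoc, (IsIso.eq_inv_comp _).mpr hq]

end IsDesc

theorem comp_q_succ_eq {o : Ordinal.{v}} {a : T.obj (S.Q o) ⟶ S.Q o}
    (ha : a ≫ S.q o (succ o) (le_succ o) = S.v o) {k : Ordinal.{v}} (hk : o ≤ k) :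
    a ≫ S.q o (succ k) (hk.trans (le_succ k)) = T.map (S.q o k hk) ≫ S.v k := by
  rw [S.map_q_comp_v, ← ha, Category.assoc, S.q_comp_q]

theorem comp_q_eq_id (hv : ∀ m, Epi (S.v m)) {o : Ordinal.{v}} {a : T.obj (S.Q o) ⟶ S.Q o}
    (ha : a ≫ S.q o (succ o) (le_succ o) = S.v o) {u : ∀ n, S.Q n ⟶ S.Q o}
    (hu : ∀ n, S.IsDesc a (S.q 0 o zero_le) n (u n)) (hu_o : u o = 𝟙 (S.Q o))
    {n : Ordinal.{v}} (hn : o ≤ n) : u n ≫ S.q o n hn = 𝟙 (S.Q n) := by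
  have hres (m n : Ordinal.{v}) (h : m ≤ n) : S.q m n h ≫ u n = u m :=
    ((hu n).restrict h).unique hv (hu m)
  rcases hn.eq_or_lt with rfl | hlt
  · rw [hu_o, S.q_refl, Category.comp_id]
  induction n using SuccOrder.limitRecOn with
  | isMin n hmin => exact absurd hlt hmin.not_lt
  | succ k _ ih =>
    have hk : o ≤ k := lt_succ_iff.mp hlt
    have hvk : S.v k ≫ u (succ k) = T.map (u k) ≫ a := by
      have h1 := (hu (succ k)).2 k (lt_succ k)
      rwa [S.q_refl, Category.id_comp, hres] at h1
    refine (cancel_epi (S.v k)).1 ?_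
    rcases hk.eq_or_lt with rfl | hlt'
    · rw [reassoc_of% hvk, ha, hu_o, T.map_id, Category.id_comp, Category.comp_id]
    · rw [reassoc_of% hvk, S.comp_q_succ_eq ha hk, ← T.map_comp_assoc, ih hk hlt', T.map_id,
        Category.id_comp, Category.comp_id]
  | isSuccLimit n hlim ih =>
    refine S.hom_ext_of_isSuccLimit hlim fun m hm => ?_
    rw [reassoc_of% hres m n hm.le, Category.comp_id]
    rcases lt_or_ge m o with hmo | hom
    · rw [← hres m o hmo.le, hu_o, Category.comp_id, S.q_comp_q]
    · rcases hom.eq_or_lt with rfl | hom'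
      · rw [hu_o, Category.id_comp]
      · rw [← S.q_comp_q hom hm.le, reassoc_of% ih m hm hom hom']

theorem comp_q_zero_eq {A : V} {ff gf : A ⟶ S.Q 0}
    (hw : ff ≫ S.q 0 (succ 0) (le_succ 0) = gf ≫ S.q 0 (succ 0) (le_succ 0)) {n : Ordinal.{v}}
    (hn : 0 < n) : ff ≫ S.q 0 n zero_le = gf ≫ S.q 0 n zero_le := by
  rw [← S.q_comp_q (le_succ 0) (succ_le_of_lt hn), reassoc_of% hw]

variable {S} in
theorem IsCompatible.map_q_zero_comp {n : Ordinal.{v}} {a : T.obj (S.Q n) ⟶ S.Q n}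
    (ha : S.IsCompatible n a) {b : T.obj (S.Q 0) ⟶ S.Q 0}
    (hv0 : S.v 0 = b ≫ S.q 0 (succ 0) (le_succ 0)) (hn : 0 < n) :
    T.map (S.q 0 n zero_le) ≫ a = b ≫ S.q 0 n zero_le := by
  rw [ha 0 hn, hv0, Category.assoc, S.q_comp_q]

section Stable

variable (n : Ordinal.{v}) [IsIso (S.q n (succ n) (le_succ n))]

theorem isCompatible_of_isIso : S.IsCompatible n (S.v n ≫ inv (S.q n (succ n) (le_succ n))) :=
  fun m hm => by
    rw [S.map_q_comp_v_assoc hm.le, ← S.q_comp_q (succ_le_of_lt hm) (le_succ n),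
      Category.assoc, IsIso.hom_inv_id, Category.comp_id]

theorem unit_of_isIso :
    T.η.app (S.Q n) ≫ S.v n ≫ inv (S.q n (succ n) (le_succ n)) = 𝟙 (S.Q n) := by
  rw [← Category.assoc, ← S.q_succ, IsIso.hom_inv_id]
  rfl

/-- Once `q n` and `q (n + 1)` are invertible, the coequaliser condition on `v (n + 1)` is the
associativity of `v n ≫ (q n)⁻¹`. -/
theorem assoc_of_isIso [IsIso (S.q (succ n) (succ (succ n)) (le_succ (succ n)))] :
    T.μ.app (S.Q n) ≫ S.v n ≫ inv (S.q n (succ n) (le_succ n)) =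
      T.map (S.v n ≫ inv (S.q n (succ n) (le_succ n))) ≫
        S.v n ≫ inv (S.q n (succ n) (le_succ n)) := by
  have h1 : T.map (S.q n (succ n) (le_succ n)) ≫ S.v (succ n) ≫
      inv (S.q (succ n) (succ (succ n)) (le_succ (succ n))) = S.v n := by
    rw [S.map_q_comp_v_assoc, IsIso.hom_inv_id, Category.comp_id]
  obtain ⟨hw, -⟩ := S.v_succ_isCoequalizer n
  have h2 := hw =≫ inv (S.q (succ n) (succ (succ n)) (le_succ (succ n)))
  simp only [Category.assoc, h1] at h2
  calc T.μ.app (S.Q n) ≫ S.v n ≫ inv (S.q n (succ n) (le_succ n))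
      = T.map (S.v n) ≫ S.v (succ n) ≫ inv (S.q (succ n) (succ (succ n)) (le_succ (succ n))) ≫
          inv (S.q n (succ n) (le_succ n)) := by rw [reassoc_of% h2]
    _ = T.map (S.v n ≫ inv (S.q n (succ n) (le_succ n))) ≫ (T.map (S.q n (succ n) (le_succ n)) ≫
          S.v (succ n) ≫ inv (S.q (succ n) (succ (succ n)) (le_succ (succ n)))) ≫
            inv (S.q n (succ n) (le_succ n)) := by
        simp only [Category.assoc]
        rw [← T.map_comp_assoc, Category.assoc, IsIso.inv_hom_id, Category.comp_id]
    _ = _ := by rw [h1]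

end Stable

section Base

variable (hv : ∀ m, Epi (S.v m)) {A : V} {ff gf : A ⟶ S.Q 0}
  {b : T.obj (S.Q 0) ⟶ S.Q 0}
  {hw : ff ≫ S.q 0 (succ 0) (le_succ 0) = gf ≫ S.q 0 (succ 0) (le_succ 0)}
  (hcol : IsColimit (Cofork.ofπ (S.q 0 (succ 0) (le_succ 0)) hw))
  (hv0 : S.v 0 = b ≫ S.q 0 (succ 0) (le_succ 0))
include hv hcol hv0

theorem exists_isDesc {Z : V} {z : T.obj Z ⟶ Z}
    (hz_unit : T.η.app Z ≫ z = 𝟙 Z) (hz_assoc : T.μ.app Z ≫ z = T.map z ≫ z) {h : S.Q 0 ⟶ Z}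
    (hfh : ff ≫ h = gf ≫ h) (hbh : T.map h ≫ z = b ≫ h) (n : Ordinal.{v}) :
    ∃ u, S.IsDesc z h n u := by
  induction n using SuccOrder.limitRecOn with
  | isMin n hn =>
    obtain rfl : n = 0 := hn.eq_bot
    exact ⟨h, by rw [S.q_refl, Category.id_comp], fun _ hm => (hn.not_lt hm).elim⟩
  | succ k _ ih =>
    obtain ⟨u, hu⟩ := ih
    suffices ∃ u', S.v k ≫ u' = T.map u ≫ z from this.imp fun _ => S.isDesc_succ hz_unit hu
    rcases (zero_le : 0 ≤ k).eq_or_lt with rfl | hk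
    · obtain ⟨u', hu'⟩ := Cofork.IsColimit.desc' hcol h hfh
      have hu0 := hu.1
      rw [Cofork.π_ofπ] at hu'
      rw [S.q_refl, Category.id_comp] at hu0
      exact ⟨u', by rw [hv0, Category.assoc, hu', hu0, hbh]⟩
    · exact (S.exists_unique_v_comp hk (hu.coequalizes hz_assoc)).exists
  | isSuccLimit n hn ih =>
    choose u hu using ih
    obtain ⟨u', hu', -⟩ := S.q_isColimit_of_isSuccLimit n hn Z u fun m m' hmm hm' =>
      ((hu m' hm').restrict hmm).unique hv (hu m _)
    exact ⟨u', S.isDesc_of_isSuccLimit hn fun m hm => (hu' m hm).symm ▸ hu m hm⟩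

theorem isIso_q_of_le {o : Ordinal.{v}} (ho : 0 < o) {a : T.obj (S.Q o) ⟶ S.Q o}
    (ha : S.IsCompatible o a) (ha_unit : T.η.app (S.Q o) ≫ a = 𝟙 (S.Q o))
    (ha_assoc : T.μ.app (S.Q o) ≫ a = T.map a ≫ a)
    (ha_v : a ≫ S.q o (succ o) (le_succ o) = S.v o) {n : Ordinal.{v}} (hn : o ≤ n) :
    IsIso (S.q o n hn) := by
  choose u hu using S.exists_isDesc hv hcol hv0 ha_unit ha_assoc (S.comp_q_zero_eq hw ho)
    (ha.map_q_zero_comp hv0 ho)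
  have hu_o : u o = 𝟙 (S.Q o) := (hu o).unique hv
    (S.isDesc_of_comm ha (by rw [T.map_id, Category.id_comp, Category.comp_id])
      (Category.comp_id _))
  have hq : S.q o n hn ≫ u n = 𝟙 (S.Q o) := hu_o ▸ ((hu n).restrict hn).unique hv (hu o)
  exact ⟨u n, hq, S.comp_q_eq_id hv ha_v hu hu_o hn⟩

theorem isIso_q_succ_of_isSuccLimit {o : Ordinal.{v}} (ho : IsSuccLimit o)
    [PreservesColimitsOfShape {m : Ordinal.{v} // m < o} (T : V ⥤ V)] {n : Ordinal.{v}}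
    (hn : o ≤ n) : IsIso (S.q n (succ n) (le_succ n)) := by
  have hiso {m : Ordinal.{v}} (hm : o ≤ m) : IsIso (S.q o m hm) :=
    S.isIso_q_of_le hv hcol hv0 ho.bot_lt (S.isCompatible_limitAction ho)
      (S.unit_limitAction ho) (S.assoc_limitAction ho) (S.limitAction_comp_q_succ ho) hm
  have := hiso hn
  have : IsIso (S.q o n hn ≫ S.q n (succ n) (le_succ n)) := by
    rw [S.q_comp_q]
    exact hiso _
  exact IsIso.of_isIso_comp_left (S.q o n hn) _

theorem exists_unique_hom (n : Ordinal.{v}) [IsIso (S.q n (succ n) (le_succ n))] {Z : V}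
    {z : T.obj Z ⟶ Z}
    (hz_unit : T.η.app Z ≫ z = 𝟙 Z) (hz_assoc : T.μ.app Z ≫ z = T.map z ≫ z) {h : S.Q 0 ⟶ Z}
    (hfh : ff ≫ h = gf ≫ h) (hbh : T.map h ≫ z = b ≫ h) :
    ∃ u : S.Q n ⟶ Z, (T.map u ≫ z = (S.v n ≫ inv (S.q n (succ n) (le_succ n))) ≫ u ∧
      S.q 0 n zero_le ≫ u = h) ∧ ∀ u' : S.Q n ⟶ Z,
        T.map u' ≫ z = (S.v n ≫ inv (S.q n (succ n) (le_succ n))) ≫ u' →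
          S.q 0 n zero_le ≫ u' = h → u' = u := by
  obtain ⟨u, hu⟩ := S.exists_isDesc hv hcol hv0 hz_unit hz_assoc hfh hbh n
  obtain ⟨u', hu'⟩ := S.exists_isDesc hv hcol hv0 hz_unit hz_assoc hfh hbh (succ n)
  exact ⟨u, ⟨hu.comm hv hu', hu.1⟩, fun s hs h0 =>
    (S.isDesc_of_comm (S.isCompatible_of_isIso n) hs h0).unique hv hu⟩

end Base

end CoequalizerSequence

/-- Let `V` have filtered colimits and coequalisers, `T` a `λ`-accessible
monad on `V` and `f, g : (A,a) ⇉ (B,b)` a parallel pair of `T`-algebra maps.  Given the data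
of the transfinite sequence `Q` of the paper --- `Q 0 = B`, at each step `v (m+1)` is the
coequaliser of `T(q m) ∘ μ` and `T (v m)`, with `q m = v m ∘ η`, and at limit stages `Q n` is
the colimit of the preceding sequence and `v n` the coequaliser of the two induced maps ---
then for any ordinal `n` with `|n| ≥ λ`, the map `q_{<n} : B ⟶ Q n` is the coequaliser of `f`
and `g` in the category of `T`-algebras (in particular `q n` is invertible and `Q n` carries
the algebra structure `(q n)⁻¹ ∘ v n`). -/
theorem stmt17 {V : Type u} [Category.{v} V]
    (T : Monad V) (Aalg Balg : T.Algebra) (f g : Aalg ⟶ Balg)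
    -- the transfinite sequence:
    (Q : Ordinal.{v} → V)
    (qle : ∀ m m' : Ordinal.{v}, m ≤ m' → (Q m ⟶ Q m'))
    (vs : ∀ m : Ordinal.{v}, T.obj (Q m) ⟶ Q (Order.succ m))
    (h0 : Q 0 = Balg.A)
    (hrefl : ∀ m, qle m m le_rfl = 𝟙 (Q m))
    (htrans : ∀ m₁ m₂ m₃ (h12 : m₁ ≤ m₂) (h23 : m₂ ≤ m₃),
      qle m₁ m₂ h12 ≫ qle m₂ m₃ h23 = qle m₁ m₃ (h12.trans h23))
    -- `q m = v m ∘ η` for every `m`: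
    (hη : ∀ m, qle m (Order.succ m) (Order.le_succ m) = T.η.app (Q m) ≫ vs m)
    -- base step: `q 0` is the coequaliser of `f` and `g` in `V`, and `v 0 = q 0 ∘ b`:
    (w0 : f.f ≫ (eqToHom h0.symm ≫ qle 0 (Order.succ 0) (Order.le_succ 0)) =
      g.f ≫ (eqToHom h0.symm ≫ qle 0 (Order.succ 0) (Order.le_succ 0)))
    (hcoeq0 : Nonempty (IsColimit (Cofork.ofπ
      (eqToHom h0.symm ≫ qle 0 (Order.succ 0) (Order.le_succ 0)) w0)))
    (hv0 : vs 0 = eqToHom (show T.obj (Q 0) = T.obj Balg.A by rw [h0]) ≫ Balg.a ≫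
      (eqToHom h0.symm ≫ qle 0 (Order.succ 0) (Order.le_succ 0)))
    -- successor step: `v (m+1)` is the coequaliser of `T(q m) ∘ μ` and `T(v m)`:
    (hsucc : ∀ m : Ordinal.{v},
      ∃ w : (T.μ.app (Q m) ≫ T.map (qle m (Order.succ m) (Order.le_succ m))) ≫
            vs (Order.succ m) = T.map (vs m) ≫ vs (Order.succ m),
        Nonempty (IsColimit (Cofork.ofπ (vs (Order.succ m)) w)))
    -- limit steps: `Q n` is the colimit of the sequence below `n`:
    (hlimQ : ∀ n : Ordinal.{v}, Order.IsSuccLimit n → ∀ (Z : V) (w : ∀ m, m < n → (Q m ⟶ Z)),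
      (∀ m m' (h : m ≤ m') (hm' : m' < n), qle m m' h ≫ w m' hm' = w m (lt_of_le_of_lt h hm')) →
      ∃! u : Q n ⟶ Z, ∀ m (hm : m < n), qle m n hm.le ≫ u = w m hm)
    -- limit steps: `v n` coequalises the two maps induced from `colim_{m<n} T²(Q m)`:
    (hlimv : ∀ n (hn : Order.IsSuccLimit n) (m) (hm : m < n),
      (T.μ.app (Q m) ≫ T.map (qle m n hm.le)) ≫ vs n =
        (T.map (vs m) ≫ T.map (qle (Order.succ m) n (hn.succ_lt hm).le)) ≫ vs n)
    (hlimvuniv : ∀ n (hn : Order.IsSuccLimit n) (Z : V) (w : T.obj (Q n) ⟶ Z),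
      (∀ m (hm : m < n),
        (T.μ.app (Q m) ≫ T.map (qle m n hm.le)) ≫ w =
          (T.map (vs m) ≫ T.map (qle (Order.succ m) n (hn.succ_lt hm).le)) ≫ w) →
      ∃! u : Q (Order.succ n) ⟶ Z, vs n ≫ u = w)
    -- accessibility:
    (κ : Cardinal.{v}) (hκ : κ.IsRegular)
    (hacc : PreservesCardFilteredColimits κ (T : V ⥤ V))
    (n : Ordinal.{v}) (hn : κ ≤ n.card) :
    ∃ hiso : IsIso (qle n (Order.succ n) (Order.le_succ n)),
      letI : IsIso (qle n (Order.succ n) (Order.le_succ n)) := hiso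
      ∃ (hunit : T.η.app (Q n) ≫
            (vs n ≫ inv (qle n (Order.succ n) (Order.le_succ n))) = 𝟙 (Q n))
        (hassoc : T.μ.app (Q n) ≫ (vs n ≫ inv (qle n (Order.succ n) (Order.le_succ n))) =
          T.map (vs n ≫ inv (qle n (Order.succ n) (Order.le_succ n))) ≫
            (vs n ≫ inv (qle n (Order.succ n) (Order.le_succ n))))
        (hmor : T.map (eqToHom h0.symm ≫ qle 0 n (zero_le (a := n))) ≫
            (vs n ≫ inv (qle n (Order.succ n) (Order.le_succ n))) =
          Balg.a ≫ (eqToHom h0.symm ≫ qle 0 n (zero_le (a := n))))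
        (walg : f ≫ (⟨eqToHom h0.symm ≫ qle 0 n (zero_le (a := n)), hmor⟩ :
              Balg ⟶ (⟨Q n, vs n ≫ inv (qle n (Order.succ n) (Order.le_succ n)),
                hunit, hassoc⟩ : T.Algebra)) =
          g ≫ ⟨eqToHom h0.symm ≫ qle 0 n (zero_le (a := n)), hmor⟩),
        Nonempty (IsColimit (Cofork.ofπ (f := f) (g := g)
          (⟨eqToHom h0.symm ≫ qle 0 n (zero_le (a := n)), hmor⟩ :
            Balg ⟶ (⟨Q n, vs n ≫ inv (qle n (Order.succ n) (Order.le_succ n)),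
              hunit, hassoc⟩ : T.Algebra)) walg)) := by
  obtain ⟨B, b, hb_unit, _⟩ := Balg
  change Q 0 = B at h0
  subst h0
  let S : CoequalizerSequence T :=
    ⟨Q, qle, vs, hrefl, htrans, hη, hsucc, hlimQ, hlimv, hlimvuniv⟩
  have hw0 : f.f ≫ S.q 0 (succ 0) (le_succ 0) = g.f ≫ S.q 0 (succ 0) (le_succ 0) := by
    simpa using w0
  have hcol : IsColimit (Cofork.ofπ (S.q 0 (succ 0) (le_succ 0)) hw0) :=
    hcoeq0.some.ofIsoColimit <| Cofork.ext (Iso.refl _) <|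
      show (𝟙 _ ≫ S.q 0 (succ 0) (le_succ 0)) ≫ 𝟙 _ = _ by simp
  have hv0' : S.v 0 = b ≫ S.q 0 (succ 0) (le_succ 0) := by simpa using hv0
  have : Epi (S.q 0 (succ 0) (le_succ 0)) := epi_of_isColimit_cofork hcol
  have hv := S.epi_v hb_unit hv0'
  have hlim : IsSuccLimit κ.ord := Cardinal.isSuccLimit_ord hκ.aleph0_le
  have := preservesColimitsOfShape_lt_ord hκ hacc
  have hn' : κ.ord ≤ n := Cardinal.ord_le.mpr hn
  have hpos : 0 < n := hlim.bot_lt.trans_le hn'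
  have := S.isIso_q_succ_of_isSuccLimit hv hcol hv0' hlim hn'
  have := S.isIso_q_succ_of_isSuccLimit hv hcol hv0' hlim (hn'.trans (le_succ n))
  have hmor := (S.isCompatible_of_isIso n).map_q_zero_comp hv0' hpos
  choose u hu huniq using fun s : Cofork f g => S.exists_unique_hom hv hcol hv0' n s.pt.unit
    s.pt.assoc (congrArg Monad.Algebra.Hom.f s.condition) s.π.h
  refine ⟨inferInstance, S.unit_of_isIso n, S.assoc_of_isIso n, by simpa using hmor,
    Monad.Algebra.Hom.ext (by simpa using S.comp_q_zero_eq hw0 hpos),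
    ⟨Cofork.IsColimit.mk _ (fun s => ⟨u s, (hu s).1⟩) (fun s => ?_) (fun s m hm => ?_)⟩⟩
  -- after `subst`, the leftover `eqToHom` is `𝟙` only up to definitional unfolding
  · exact Monad.Algebra.Hom.ext <|
      show (𝟙 _ ≫ S.q 0 n zero_le) ≫ u s = _ by rw [Category.id_comp, (hu s).2]
  · refine Monad.Algebra.Hom.ext (huniq s m.f m.h ?_)
    have hm' : (𝟙 _ ≫ S.q 0 n zero_le) ≫ m.f = s.π.f := congrArg Monad.Algebra.Hom.f hm
    rwa [Category.id_comp] at hm'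

end Paper
end
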